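/- arXiv:0902.1216 — 5 statements merged into one kernel-verified Lean document; each statement's English description precedes it below -/
import Mathlib

section
/- Let k be a finite field with q elements, A a finite-dimensional k-algebra, and M₁, ..., M_r pairwise non-isomorphic indecomposable finite-dimensional A-modules. Let s₁, ..., s_r be positive integers and M = M₁^{⊕s₁} ⊕ ··· ⊕ M_r^{⊕s_r}. Then |Aut_A(M)| = q^{S} · ∏_{i=1}^{r} |Aut_A(M_i^{⊕s_i})|, where S = Σ_{i≠j} s_i s_j · dim_k Hom_A(M_i, M_j). -/
open LinearMap Function

section Basic
variable {A : Type} [Ring A]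

lemma isUnit_iff_bijective {V : Type} [AddCommGroup V] [Module A V]
    (φ : Module.End A V) : IsUnit φ ↔ Function.Bijective φ := by
  constructor
  · rintro ⟨u, rfl⟩
    exact Function.bijective_iff_has_inverse.2 ⟨(u⁻¹ : _), fun x => LinearMap.congr_fun u.inv_mul x,
      fun x => LinearMap.congr_fun u.mul_inv x⟩
  · intro h
    let e := LinearEquiv.ofBijective φ h
    exact ⟨⟨φ, e.symm, by ext x; exact e.apply_symm_apply x, by ext x; exact e.symm_apply_apply x⟩,
      rfl⟩

lemma nilp_no_left_inv {R : Type*} [Ring R] [Nontrivial R] {x : R} (hx : IsNilpotent x) (b : R) :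
    b * x ≠ 1 := by
  intro h
  obtain ⟨N, hN⟩ := hx
  have key : ∀ n, b ^ n * x ^ n = 1 := by
    intro n
    induction n with
    | zero => simp
    | succ n ih =>
      rw [pow_succ b n, pow_succ' x n, mul_assoc, ← mul_assoc b x, h, one_mul, ih]
  have := key N
  rw [hN, mul_zero] at this
  exact zero_ne_one this

lemma nilp_no_right_inv {R : Type*} [Ring R] [Nontrivial R] {x : R} (hx : IsNilpotent x) (b : R) :
    x * b ≠ 1 := by
  intro h
  obtain ⟨N, hN⟩ := hx
  have key : ∀ n, x ^ n * b ^ n = 1 := by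
    intro n
    induction n with
    | zero => simp
    | succ n ih =>
      rw [pow_succ' b n, pow_succ x n, mul_assoc, ← mul_assoc x b, h, one_mul, ih]
  have := key N
  rw [hN, zero_mul] at this
  exact zero_ne_one this

end Basic

section Dich
variable {A : Type} [Ring A] {V : Type} [AddCommGroup V] [Module A V]

lemma end_nontrivial [Nontrivial V] : Nontrivial (Module.End A V) := by
  obtain ⟨v, hv⟩ := exists_ne (0 : V)
  exact ⟨1, 0, fun h => hv (by simpa using LinearMap.congr_fun h v)⟩

lemma unit_or_nilpotent [Finite V]
    (hind : ∀ N₁ N₂ : Submodule A V, IsCompl N₁ N₂ → N₁ = ⊥ ∨ N₂ = ⊥)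
    (φ : Module.End A V) : IsUnit φ ∨ IsNilpotent φ := by
  have : IsArtinian A V := isArtinian_of_finite
  have : IsNoetherian A V := isNoetherian_of_finite A V
  obtain ⟨n, hn⟩ := Filter.eventually_atTop.mp (φ.eventually_isCompl_ker_pow_range_pow)
  set m := n + 1
  have hm := hn m (Nat.le_succ n)
  rcases hind _ _ hm with h | h
  · left
    rw [isUnit_iff_bijective]
    have hinj : Function.Injective (φ ^ m) := LinearMap.ker_eq_bot.mp h
    have : Function.Injective φ := by
      have : (φ : V →ₗ[A] V) ^ m = (φ ^ n) ∘ₗ φ := by rw [pow_succ]; rfl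
      rw [this] at hinj
      exact Function.Injective.of_comp (f := ⇑(φ ^ n)) hinj
    exact Finite.injective_iff_bijective.mp this
  · right
    exact ⟨m, LinearMap.range_eq_bot.mp h⟩

variable [Finite V] [Nontrivial V]
  (hind : ∀ N₁ N₂ : Submodule A V, IsCompl N₁ N₂ → N₁ = ⊥ ∨ N₂ = ⊥)

include hind

lemma nonunit_mul_left {x : Module.End A V} (hx : ¬ IsUnit x) (a : Module.End A V) :
    ¬ IsUnit (a * x) := by
  have : Nontrivial (Module.End A V) := end_nontrivial
  have hnil : IsNilpotent x := (unit_or_nilpotent hind x).resolve_left hx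
  rintro ⟨u, hu⟩
  exact nilp_no_left_inv hnil (↑u⁻¹ * a) (by rw [mul_assoc, ← hu, Units.inv_mul])

lemma nonunit_mul_right {x : Module.End A V} (hx : ¬ IsUnit x) (a : Module.End A V) :
    ¬ IsUnit (x * a) := by
  have : Nontrivial (Module.End A V) := end_nontrivial
  have hnil : IsNilpotent x := (unit_or_nilpotent hind x).resolve_left hx
  rintro ⟨u, hu⟩
  exact nilp_no_right_inv hnil (a * ↑u⁻¹) (by rw [← mul_assoc, ← hu, Units.mul_inv])

lemma nonunit_add {x y : Module.End A V} (hx : ¬ IsUnit x) (hy : ¬ IsUnit y) :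
    ¬ IsUnit (x + y) := by
  intro h
  obtain ⟨u, hu⟩ := h
  have h1 : (↑u⁻¹ * x) + (↑u⁻¹ * y) = 1 := by rw [← mul_add, ← hu, Units.inv_mul]
  have hx' : ¬ IsUnit (↑u⁻¹ * x) := nonunit_mul_left hind hx _
  have hnil : IsNilpotent (↑u⁻¹ * x : Module.End A V) :=
    (unit_or_nilpotent hind _).resolve_left hx'
  have : IsUnit (↑u⁻¹ * y : Module.End A V) := by
    have : (↑u⁻¹ * y : Module.End A V) = 1 - ↑u⁻¹ * x := by rw [← h1]; abel
    rw [this]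
    exact hnil.isUnit_one_sub
  refine hy ?_
  rw [show y = ↑u * (↑u⁻¹ * y) by rw [← mul_assoc, Units.mul_inv, one_mul]]
  exact u.isUnit.mul this

lemma unit_add_nonunit {u x : Module.End A V} (hu : IsUnit u) (hx : ¬ IsUnit x) :
    IsUnit (u + x) := by
  obtain ⟨v, rfl⟩ := hu
  have hx' : ¬ IsUnit ((↑v⁻¹ : Module.End A V) * x) := nonunit_mul_left hind hx _
  have hnil : IsNilpotent ((↑v⁻¹ : Module.End A V) * x) :=
    (unit_or_nilpotent hind _).resolve_left hx'
  have h1 : IsUnit (1 + (↑v⁻¹ : Module.End A V) * x) := hnil.isUnit_one_add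
  have heq : (v : Module.End A V) + x = ↑v * (1 + (↑v⁻¹ : Module.End A V) * x) := by
    rw [mul_add, mul_one, ← mul_assoc, Units.mul_inv, one_mul]
  rw [heq]
  exact v.isUnit.mul h1
end Dich

section Cross
variable {A : Type} [Ring A] {V W : Type} [AddCommGroup V] [Module A V]
  [AddCommGroup W] [Module A W] [Finite W] [Nontrivial V] [Nontrivial W]

lemma cross_nonunit
    (hindW : ∀ N₁ N₂ : Submodule A W, IsCompl N₁ N₂ → N₁ = ⊥ ∨ N₂ = ⊥)
    (hne : IsEmpty (V ≃ₗ[A] W))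
    (f : V →ₗ[A] W) (g : W →ₗ[A] V) : ¬ IsUnit (g ∘ₗ f : Module.End A V) := by
  have hntV : Nontrivial (Module.End A V) := end_nontrivial
  have hntW : Nontrivial (Module.End A W) := end_nontrivial
  intro h
  set u := h.unit with hu
  set t : W →ₗ[A] V := (↑u⁻¹ : Module.End A V) ∘ₗ g with ht
  have htf : t ∘ₗ f = LinearMap.id := by
    rw [ht, LinearMap.comp_assoc]
    have : (g ∘ₗ f : Module.End A V) = ↑u := h.unit_spec.symm
    rw [this]
    exact u.inv_mul
  set p : Module.End A W := f ∘ₗ t with hp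
  have hpp : p * p = p := by
    show (f ∘ₗ t) ∘ₗ (f ∘ₗ t) = f ∘ₗ t
    rw [LinearMap.comp_assoc, ← LinearMap.comp_assoc t f t, htf, LinearMap.id_comp]
  rcases unit_or_nilpotent hindW p with hv | hnil
  · have hp1 : p = 1 := hv.mul_left_cancel (by rw [hpp, mul_one])
    have : f ∘ₗ t = LinearMap.id := hp1
    exact hne.elim (LinearEquiv.ofLinear f t this htf)
  · obtain ⟨N, hN⟩ := hnil
    have hNpos : N ≠ 0 := by
      rintro rfl
      exact one_ne_zero (α := Module.End A W) (by simpa using hN)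
    have hppow : ∀ n, 1 ≤ n → p ^ n = p := by
      intro n hn
      induction n with
      | zero => omega
      | succ m ih =>
        rcases Nat.eq_or_lt_of_le hn with h1 | h1
        · simp [← h1]
        · rw [pow_succ, ih (by omega), hpp]
    have hp0 : p = 0 := by rw [← hppow N (by omega), hN]
    have hf0 : f = 0 := by
      have : p ∘ₗ f = f := by
        rw [hp, LinearMap.comp_assoc, htf, LinearMap.comp_id]
      rw [← this, hp0, LinearMap.zero_comp]
    have : (LinearMap.id : V →ₗ[A] V) = 0 := by rw [← htf, hf0, LinearMap.comp_zero]
    exact one_ne_zero (α := Module.End A V) this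

end Cross

section Ent
variable {A : Type} [Ring A]
  {ι : Type} [Fintype ι] [DecidableEq ι]
  {κ : Type} [Fintype κ] [DecidableEq κ]
  {W : ι → Type} [∀ t, AddCommGroup (W t)] [∀ t, Module A (W t)]
  {Z : κ → Type} [∀ t, AddCommGroup (Z t)] [∀ t, Module A (Z t)]
  {P Q : Type} [AddCommGroup P] [Module A P] [AddCommGroup Q] [Module A Q]

def ent (f : (∀ t, W t) →ₗ[A] (∀ u, Z u)) (a : κ) (b : ι) : W b →ₗ[A] Z a :=
  proj a ∘ₗ f ∘ₗ single A W b

lemma comp_decomp (f : (∀ t, W t) →ₗ[A] P) (g : Q →ₗ[A] (∀ t, W t)) :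
    f ∘ₗ g = ∑ t, (f ∘ₗ single A W t) ∘ₗ (proj t ∘ₗ g) := by
  ext x
  rw [LinearMap.sum_apply]
  simp only [LinearMap.comp_apply, proj_apply, single_apply]
  rw [← map_sum]
  congr 1
  exact (Finset.univ_sum_single (g x)).symm

end Ent

section Ent2
variable {A : Type} [Ring A]
  {ι : Type} [Fintype ι] [DecidableEq ι]
  {κ : Type} [Fintype κ] [DecidableEq κ]
  {μ : Type} [Fintype μ] [DecidableEq μ]
  {W : ι → Type} [∀ t, AddCommGroup (W t)] [∀ t, Module A (W t)]
  {Z : κ → Type} [∀ t, AddCommGroup (Z t)] [∀ t, Module A (Z t)]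
  {X : μ → Type} [∀ t, AddCommGroup (X t)] [∀ t, Module A (X t)]

lemma ent_comp (f : (∀ t, Z t) →ₗ[A] (∀ t, X t)) (g : (∀ t, W t) →ₗ[A] (∀ t, Z t))
    (a : μ) (b : ι) :
    ent (f ∘ₗ g) a b = ∑ c, ent f a c ∘ₗ ent g c b := by
  unfold ent
  rw [comp_decomp f g]
  ext v
  rw [LinearMap.sum_apply]
  simp only [LinearMap.comp_apply, LinearMap.sum_apply, proj_apply]
  rw [Finset.sum_apply]

lemma ent_add (f g : (∀ t, W t) →ₗ[A] (∀ t, Z t)) (a : κ) (b : ι) :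
    ent (f + g) a b = ent f a b + ent g a b := by
  unfold ent
  rw [LinearMap.add_comp, LinearMap.comp_add]

lemma ent_sub (f g : (∀ t, W t) →ₗ[A] (∀ t, Z t)) (a : κ) (b : ι) :
    ent (f - g) a b = ent f a b - ent g a b := by
  unfold ent
  rw [LinearMap.sub_comp, LinearMap.comp_sub]

lemma ent_one_same (a : ι) : ent (LinearMap.id : (∀ t, W t) →ₗ[A] ∀ t, W t) a a = LinearMap.id := by
  unfold ent
  rw [LinearMap.id_comp, proj_comp_single_same]

lemma ent_one_ne {a b : ι} (h : a ≠ b) :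
    ent (LinearMap.id : (∀ t, W t) →ₗ[A] ∀ t, W t) a b = 0 := by
  unfold ent
  rw [LinearMap.id_comp, proj_comp_single_ne A W a b h]


end Ent2

section Peel
variable {A : Type} [Ring A] {n : ℕ} {W : Fin (n+1) → Type}
  [∀ t, AddCommGroup (W t)] [∀ t, Module A (W t)]

def peel : (∀ t, W t) ≃ₗ[A] W 0 × (∀ t : Fin n, W t.succ) where
  toFun f := (f 0, fun t => f t.succ)
  invFun p := Fin.cons p.1 p.2
  map_add' f g := rfl
  map_smul' c f := rfl
  left_inv f := Fin.cons_self_tail f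
  right_inv p := by
    refine Prod.ext (by simp) ?_
    funext t
    simp

lemma cons_zero_single (v : W 0) : (Fin.cons v 0 : ∀ t, W t) = Pi.single 0 v := by
  funext i
  induction i using Fin.cases with
  | zero => simp
  | succ t => simp [Pi.single_eq_of_ne (Fin.succ_ne_zero t)]

lemma cons_single_succ (t : Fin n) (w : W t.succ) :
    (Fin.cons 0 (Pi.single t w) : ∀ t, W t) = Pi.single t.succ w := by
  funext i
  induction i using Fin.cases with
  | zero => simp [Pi.single_eq_of_ne (Fin.succ_ne_zero t).symm]
  | succ u =>
    rcases eq_or_ne u t with rfl | h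
    · simp
    · simp [Pi.single_eq_of_ne h, Pi.single_eq_of_ne (fun hh => h (Fin.succ_injective _ hh))]

end Peel

section Schur
variable {A X Y : Type} [Ring A] [AddCommGroup X] [AddCommGroup Y] [Module A X] [Module A Y]

lemma schur_isUnit (e : Module.End A (X × Y)) (a' : Module.End A X)
    (h1 : (fst A X Y ∘ₗ e ∘ₗ inl A X Y) ∘ₗ a' = LinearMap.id)
    (h2 : a' ∘ₗ (fst A X Y ∘ₗ e ∘ₗ inl A X Y) = LinearMap.id)
    (hs : IsUnit ((snd A X Y ∘ₗ e ∘ₗ inr A X Y)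
        - (snd A X Y ∘ₗ e ∘ₗ inl A X Y) ∘ₗ a' ∘ₗ (fst A X Y ∘ₗ e ∘ₗ inr A X Y))) :
    IsUnit e := by
  set a : Module.End A X := fst A X Y ∘ₗ e ∘ₗ inl A X Y with ha
  set b : Y →ₗ[A] X := fst A X Y ∘ₗ e ∘ₗ inr A X Y with hb
  set c : X →ₗ[A] Y := snd A X Y ∘ₗ e ∘ₗ inl A X Y with hc
  set d : Module.End A Y := snd A X Y ∘ₗ e ∘ₗ inr A X Y with hd
  set s : Module.End A Y := d - c ∘ₗ a' ∘ₗ b with hsdef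
  -- the triangular factors
  set z : Module.End A (X × Y) := inr A X Y ∘ₗ (c ∘ₗ a') ∘ₗ fst A X Y with hz
  set w : Module.End A (X × Y) := inl A X Y ∘ₗ (a' ∘ₗ b) ∘ₗ snd A X Y with hw
  have hzz : z * z = 0 := by
    apply LinearMap.ext
    rintro ⟨x, y⟩
    simp [hz, Module.End.mul_apply]
  have hww : w * w = 0 := by
    apply LinearMap.ext
    rintro ⟨x, y⟩
    simp [hw, Module.End.mul_apply]
  have hL : IsUnit (1 + z) := by
    refine ⟨⟨1 + z, 1 - z, ?_, ?_⟩, rfl⟩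
    · rw [mul_sub, mul_one, add_mul, one_mul, hzz]; abel
    · rw [sub_mul, one_mul, mul_add, mul_one, hzz]; abel
  have hU : IsUnit (1 + w) := by
    refine ⟨⟨1 + w, 1 - w, ?_, ?_⟩, ?_⟩
    · rw [mul_sub, mul_one, add_mul, one_mul, hww]; abel
    · rw [sub_mul, one_mul, mul_add, mul_one, hww]; abel
    · rfl
  have hD : IsUnit (prodMap a s) := by
    have e1 : a * a' = 1 := h1
    have e1' : a' * a = 1 := h2
    have e2 : (s * ↑hs.unit⁻¹ : Module.End A Y) = 1 := hs.mul_val_inv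
    have e2' : (↑hs.unit⁻¹ * s : Module.End A Y) = 1 := hs.val_inv_mul
    refine ⟨⟨prodMap a s, prodMap a' ↑hs.unit⁻¹, ?_, ?_⟩, rfl⟩
    · apply LinearMap.ext
      rintro ⟨x, y⟩
      simp only [Module.End.mul_apply, prodMap_apply, Module.End.one_apply]
      exact Prod.ext (LinearMap.congr_fun e1 x) (LinearMap.congr_fun e2 y)
    · apply LinearMap.ext
      rintro ⟨x, y⟩
      simp only [Module.End.mul_apply, prodMap_apply, Module.End.one_apply]
      exact Prod.ext (LinearMap.congr_fun e1' x) (LinearMap.congr_fun e2' y)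
  have key : e = (1 + z) * (prodMap a s * (1 + w)) := by
    apply LinearMap.ext
    rintro ⟨x, y⟩
    have hsplit : ((x, y) : X × Y) = (x, 0) + (0, y) := by simp
    have he1 : e (x, 0) = (a x, c x) := rfl
    have he2 : e (0, y) = (b y, d y) := rfl
    have haa' : ∀ v, a (a' v) = v := fun v => LinearMap.congr_fun h1 v
    have ha'a : ∀ v, a' (a v) = v := fun v => LinearMap.congr_fun h2 v
    rw [hsplit, map_add, he1, he2]
    simp only [Module.End.mul_apply, LinearMap.add_apply, Module.End.one_apply,
      LinearMap.comp_apply, fst_apply, snd_apply, inl_apply, inr_apply, prodMap_apply,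
      hz, hw, hsdef, LinearMap.sub_apply, map_add, map_zero]
    rw [Prod.mk_add_mk]
    simp only [Prod.fst_add, Prod.snd_add, Prod.mk_add_mk, add_zero, zero_add, map_add]
    refine Prod.ext ?_ ?_ <;> simp [haa', ha'a] <;> abel
  rw [key]
  exact hL.mul (hD.mul hU)

end Schur

@[simp] lemma peel_apply {A : Type} [Ring A] {n : ℕ} {W : Fin (n+1) → Type}
    [∀ t, AddCommGroup (W t)] [∀ t, Module A (W t)] (f : ∀ t, W t) :
    (peel (A := A) (W := W)) f = (f 0, fun t : Fin n => f t.succ) := rfl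

@[simp] lemma peel_symm_apply {A : Type} [Ring A] {n : ℕ} {W : Fin (n+1) → Type}
    [∀ t, AddCommGroup (W t)] [∀ t, Module A (W t)] (p : W 0 × ∀ t : Fin n, W t.succ) :
    (peel (A := A) (W := W)).symm p = Fin.cons p.1 p.2 := rfl

@[simp] lemma ent_apply {A : Type} [Ring A] {ι : Type} [DecidableEq ι] {κ : Type}
    {W : ι → Type} [∀ t, AddCommGroup (W t)] [∀ t, Module A (W t)]
    {Z : κ → Type} [∀ t, AddCommGroup (Z t)] [∀ t, Module A (Z t)]
    (f : (∀ t, W t) →ₗ[A] (∀ u, Z u)) (a : κ) (b : ι) (w : W b) :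
    ent f a b w = f (Pi.single b w) a := rfl

section Conj
variable {A : Type} [Ring A] {V₁ V₂ : Type} [AddCommGroup V₁] [Module A V₁]
  [AddCommGroup V₂] [Module A V₂]

lemma isUnit_conj (E : V₁ ≃ₗ[A] V₂) (f : Module.End A V₁) :
    IsUnit (E.toLinearMap ∘ₗ f ∘ₗ E.symm.toLinearMap : Module.End A V₂) ↔ IsUnit f := by
  rw [isUnit_iff_bijective, isUnit_iff_bijective]
  constructor
  · intro h
    have hf : (f : V₁ → V₁) = E.symm ∘ ⇑(E.toLinearMap ∘ₗ f ∘ₗ E.symm.toLinearMap) ∘ E := by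
      funext v; simp
    rw [hf]
    exact E.symm.bijective.comp (h.comp E.bijective)
  · intro h
    have hf : ⇑(E.toLinearMap ∘ₗ f ∘ₗ E.symm.toLinearMap : Module.End A V₂) = E ∘ f ∘ E.symm := by
      funext v; simp
    rw [hf]
    exact E.bijective.comp (h.comp E.symm.bijective)

end Conj

section OneAdd
variable {A : Type} [Ring A] {V : Type} [AddCommGroup V] [Module A V] [Finite V] [Nontrivial V]

lemma one_add_sm (hind : ∀ N₁ N₂ : Submodule A V, IsCompl N₁ N₂ → N₁ = ⊥ ∨ N₂ = ⊥) :
    ∀ (m : ℕ) (x : Module.End A (Fin m → V)),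
    (∀ a b, ¬ IsUnit (ent x a b)) → IsUnit (1 + x) := by
  intro m
  induction m with
  | zero =>
    intro x _
    have : Subsingleton (Fin 0 → V) := ⟨fun f g => funext fun i => i.elim0⟩
    have : Subsingleton (Module.End A (Fin 0 → V)) := ⟨fun f g => LinearMap.ext fun v =>
      Subsingleton.elim _ _⟩
    rw [Subsingleton.elim (1 + x) 1]
    exact isUnit_one
  | succ m IH =>
    intro x hx
    set E : (Fin (m+1) → V) ≃ₗ[A] V × (Fin m → V) := peel with hE
    set φ : Module.End A (V × (Fin m → V)) :=
      E.toLinearMap ∘ₗ (1 + x) ∘ₗ E.symm.toLinearMap with hφ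
    rw [← isUnit_conj E (1 + x)]
    have hA : fst A V (Fin m → V) ∘ₗ φ ∘ₗ inl A V (Fin m → V) = 1 + ent x 0 0 := by
      apply LinearMap.ext; intro v
      simp [hφ, hE, cons_zero_single, ent]
    have haU : IsUnit (1 + ent x 0 0) := unit_add_nonunit hind isUnit_one (hx 0 0)
    apply schur_isUnit φ ↑haU.unit⁻¹
    · rw [hA]; exact haU.mul_val_inv
    · rw [hA]; exact haU.val_inv_mul
    · -- Schur complement is 1 + (small)
      set bb : (Fin m → V) →ₗ[A] V := fst A V (Fin m → V) ∘ₗ φ ∘ₗ inr A V (Fin m → V) with hbb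
      set cc : V →ₗ[A] (Fin m → V) := snd A V (Fin m → V) ∘ₗ φ ∘ₗ inl A V (Fin m → V) with hcc
      set dd : Module.End A (Fin m → V) :=
        snd A V (Fin m → V) ∘ₗ φ ∘ₗ inr A V (Fin m → V) with hdd
      set y : Module.End A (Fin m → V) := dd - cc ∘ₗ (↑haU.unit⁻¹ : Module.End A V) ∘ₗ bb - 1
        with hy
      have hcomp : ∀ a b : Fin m, ent (cc ∘ₗ (↑haU.unit⁻¹ : Module.End A V) ∘ₗ bb) a b
          = ent x a.succ 0 ∘ₗ (↑haU.unit⁻¹ : Module.End A V) ∘ₗ ent x 0 b.succ := by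
        intro a b
        apply LinearMap.ext; intro v
        simp [hcc, hbb, hφ, hE, ent, cons_single_succ, cons_zero_single,
          Pi.single_eq_of_ne (Ne.symm (Fin.succ_ne_zero b)),
          Pi.single_eq_of_ne (Fin.succ_ne_zero a)]
      have hddent : ∀ a b : Fin m, ent dd a b
          = ent (1 : Module.End A (Fin m → V)) a b + ent x a.succ b.succ := by
        intro a b
        apply LinearMap.ext; intro v
        simp [hdd, hφ, hE, ent, cons_single_succ]
        rcases eq_or_ne b a with rfl | h
        · simp
        · have h1 : a.succ ≠ b.succ := fun hh => h (Fin.succ_injective _ hh).symm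
          have h2 : a ≠ b := fun hh => h hh.symm
          rw [Pi.single_eq_of_ne h1, Pi.single_eq_of_ne h2]
      have hyent : ∀ a b : Fin m, ¬ IsUnit (ent y a b) := by
        intro a b
        have : ent y a b = ent x a.succ b.succ
            + (- (ent x a.succ 0 ∘ₗ (↑haU.unit⁻¹ : Module.End A V) ∘ₗ ent x 0 b.succ)) := by
          rw [hy, ent_sub, ent_sub, hcomp, hddent]
          abel
        rw [this]
        apply nonunit_add hind (hx a.succ b.succ)
        rw [IsUnit.neg_iff]
        exact nonunit_mul_left hind (nonunit_mul_left hind (hx 0 b.succ) _) _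
      have h1y : IsUnit (1 + y) := IH y hyent
      have : dd - cc ∘ₗ (↑haU.unit⁻¹ : Module.End A V) ∘ₗ bb = 1 + y := by
        rw [hy]; abel
      rw [this]
      exact h1y

end OneAdd

lemma ent_sum {A : Type} [Ring A] {ι : Type} [DecidableEq ι] {κ : Type}
    {W : ι → Type} [∀ t, AddCommGroup (W t)] [∀ t, Module A (W t)]
    {Z : κ → Type} [∀ t, AddCommGroup (Z t)] [∀ t, Module A (Z t)]
    {γ : Type} (s : Finset γ) (f : γ → ((∀ t, W t) →ₗ[A] (∀ u, Z u))) (a : κ) (b : ι) :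
    ent (∑ c ∈ s, f c) a b = ∑ c ∈ s, ent (f c) a b := by
  apply LinearMap.ext; intro v
  rw [LinearMap.sum_apply]
  simp only [ent_apply, LinearMap.sum_apply]
  rw [Finset.sum_apply]

lemma nonunit_sum {A : Type} [Ring A] {V : Type} [AddCommGroup V] [Module A V]
    [Finite V] [Nontrivial V]
    (hind : ∀ N₁ N₂ : Submodule A V, IsCompl N₁ N₂ → N₁ = ⊥ ∨ N₂ = ⊥)
    {γ : Type} (s : Finset γ) (f : γ → Module.End A V)
    (hf : ∀ c ∈ s, ¬ IsUnit (f c)) : ¬ IsUnit (∑ c ∈ s, f c) := by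
  classical
  have : Nontrivial (Module.End A V) := end_nontrivial
  induction s using Finset.induction with
  | empty => simpa using not_isUnit_zero
  | @insert c s hc ih =>
    rw [Finset.sum_insert hc]
    exact nonunit_add hind (hf c (Finset.mem_insert_self c s))
      (ih fun c hcs => hf c (Finset.mem_insert_of_mem hcs))

lemma isUnit_of_left_right {R : Type*} [Ring R] {x b c : R}
    (h1 : b * x = 1) (h2 : x * c = 1) : IsUnit x := by
  have hbc : b = c := by rw [← mul_one b, ← h2, ← mul_assoc, h1, one_mul]
  exact ⟨⟨x, c, h2, hbc ▸ h1⟩, rfl⟩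

section Main
variable {A : Type} [Ring A] {r : ℕ} {M : Fin r → Type}
  [∀ i, AddCommGroup (M i)] [∀ i, Module A (M i)]
  [∀ i, Finite (M i)] [∀ i, Nontrivial (M i)]
  (hind : ∀ i, ∀ N₁ N₂ : Submodule A (M i), IsCompl N₁ N₂ → N₁ = ⊥ ∨ N₂ = ⊥)
  (hnoniso : ∀ i j, i ≠ j → IsEmpty (M i ≃ₗ[A] M j))

include hind in
lemma blk_unit_add_sm {i : Fin r} {t : ℕ} {u x : Module.End A (Fin t → M i)}
    (hu : IsUnit u) (hx : ∀ a b, ¬ IsUnit (ent x a b)) : IsUnit (u + x) := by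
  have key : u + x = u * (1 + ↑hu.unit⁻¹ * x) := by
    rw [mul_add, mul_one, ← mul_assoc, hu.mul_val_inv, one_mul]
  rw [key]
  refine hu.mul (one_add_sm (hind i) t _ ?_)
  intro a b
  have : ent ((↑hu.unit⁻¹ * x : Module.End A (Fin t → M i))) a b
      = ∑ c, ent (↑hu.unit⁻¹ : Module.End A (Fin t → M i)) a c ∘ₗ ent x c b :=
    ent_comp _ _ a b
  rw [this]
  exact nonunit_sum (hind i) _ _ fun c _ => nonunit_mul_left (hind i) (hx c b) _

include hind hnoniso in
lemma sm_of_cross {i j : Fin r} (hij : i ≠ j) {t₁ t₂ : ℕ}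
    (X : (Fin t₂ → M j) →ₗ[A] (Fin t₁ → M i)) (Y : (Fin t₁ → M i) →ₗ[A] (Fin t₂ → M j))
    (a b : Fin t₁) : ¬ IsUnit (ent (X ∘ₗ Y) a b) := by
  rw [ent_comp]
  exact nonunit_sum (hind i) _ _ fun c _ =>
    cross_nonunit (hind j) (hnoniso i j hij) (ent Y c b) (ent X a c)

end Main

section Main2
variable {A : Type} [Ring A] {r : ℕ} {M : Fin r → Type}
  [∀ i, AddCommGroup (M i)] [∀ i, Module A (M i)]
  [∀ i, Finite (M i)] [∀ i, Nontrivial (M i)]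
  (hind : ∀ i, ∀ N₁ N₂ : Submodule A (M i), IsCompl N₁ N₂ → N₁ = ⊥ ∨ N₂ = ⊥)
  (hnoniso : ∀ i j, i ≠ j → IsEmpty (M i ≃ₗ[A] M j))

include hind hnoniso in
lemma key_fwd {n : ℕ} (g : Fin n → Fin r) (hg : Function.Injective g) (t : Fin n → ℕ)
    (φ : Module.End A (∀ i, Fin (t i) → M (g i))) (hu : IsUnit φ) (i : Fin n) :
    IsUnit (ent φ i i) := by
  classical
  set ψ : Module.End A (∀ i, Fin (t i) → M (g i)) := ↑hu.unit⁻¹ with hψ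
  have main : ∀ (χ ω : Module.End A (∀ i, Fin (t i) → M (g i))), χ ∘ₗ ω = 1 →
      ∃ R : Module.End A (Fin (t i) → M (g i)),
        IsUnit (1 - R) ∧ ent χ i i ∘ₗ ent ω i i = 1 - R := by
    intro χ ω hχω
    refine ⟨∑ j ∈ Finset.univ.erase i, ent χ i j ∘ₗ ent ω j i, ?_, ?_⟩
    · have hR : ∀ a b, ¬ IsUnit (ent
          (-∑ j ∈ Finset.univ.erase i, ent χ i j ∘ₗ ent ω j i) a b) := by
        intro a b
        have hne : ent (-∑ j ∈ Finset.univ.erase i, ent χ i j ∘ₗ ent ω j i) a b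
            = - ∑ j ∈ Finset.univ.erase i, ent (ent χ i j ∘ₗ ent ω j i) a b := by
          have h0 : (-∑ j ∈ Finset.univ.erase i, ent χ i j ∘ₗ ent ω j i)
              = (0 : Module.End A (Fin (t i) → M (g i)))
                - ∑ j ∈ Finset.univ.erase i, ent χ i j ∘ₗ ent ω j i := by abel
          rw [h0, ent_sub, ent_sum]
          have : ent (0 : Module.End A (Fin (t i) → M (g i))) a b = 0 := by
            apply LinearMap.ext; intro v; simp
          rw [this, zero_sub]
        rw [hne, IsUnit.neg_iff]
        apply nonunit_sum (hind (g i))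
        intro j hj
        have hji : j ≠ i := Finset.ne_of_mem_erase hj
        exact sm_of_cross hind hnoniso (fun h => hji (hg h).symm) (ent χ i j) (ent ω j i) a b
      have := one_add_sm (hind (g i)) (t i) _ hR
      rwa [show (1 + -∑ j ∈ Finset.univ.erase i, ent χ i j ∘ₗ ent ω j i)
        = 1 - ∑ j ∈ Finset.univ.erase i, ent χ i j ∘ₗ ent ω j i by abel] at this
    · have hsum : ∑ j, ent χ i j ∘ₗ ent ω j i = 1 := by
        rw [← ent_comp, hχω]
        exact ent_one_same i
      rw [eq_sub_iff_add_eq, ← hsum]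
      exact Finset.add_sum_erase Finset.univ (fun j => ent χ i j ∘ₗ ent ω j i) (Finset.mem_univ i)
  obtain ⟨R1, hR1, hE1⟩ := main φ ψ hu.mul_val_inv
  obtain ⟨R2, hR2, hE2⟩ := main ψ φ hu.val_inv_mul
  refine isUnit_of_left_right (b := ↑hR2.unit⁻¹ * ent ψ i i)
    (c := ent ψ i i * ↑hR1.unit⁻¹) ?_ ?_
  · rw [mul_assoc, show (ent ψ i i * ent φ i i : Module.End A (Fin (t i) → M (g i)))
      = 1 - R2 from hE2, hR2.val_inv_mul]
  · rw [← mul_assoc, show (ent φ i i * ent ψ i i : Module.End A (Fin (t i) → M (g i)))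
      = 1 - R1 from hE1, hR1.mul_val_inv]

end Main2

lemma ent_neg {A : Type} [Ring A] {ι : Type} [DecidableEq ι] {κ : Type}
    {W : ι → Type} [∀ t, AddCommGroup (W t)] [∀ t, Module A (W t)]
    {Z : κ → Type} [∀ t, AddCommGroup (Z t)] [∀ t, Module A (Z t)]
    (f : (∀ t, W t) →ₗ[A] (∀ u, Z u)) (a : κ) (b : ι) :
    ent (-f) a b = - ent f a b := by
  apply LinearMap.ext; intro v; simp

section Main3
variable {A : Type} [Ring A] {r : ℕ} {M : Fin r → Type}
  [∀ i, AddCommGroup (M i)] [∀ i, Module A (M i)]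
  [∀ i, Finite (M i)] [∀ i, Nontrivial (M i)]
  (hind : ∀ i, ∀ N₁ N₂ : Submodule A (M i), IsCompl N₁ N₂ → N₁ = ⊥ ∨ N₂ = ⊥)
  (hnoniso : ∀ i j, i ≠ j → IsEmpty (M i ≃ₗ[A] M j))

include hind hnoniso in
lemma key_bwd : ∀ {n : ℕ} (g : Fin n → Fin r), Function.Injective g → ∀ (t : Fin n → ℕ)
    (φ : Module.End A (∀ i, Fin (t i) → M (g i))),
    (∀ i, IsUnit (ent φ i i)) → IsUnit φ := by
  intro n
  induction n with
  | zero =>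
    intro g _ t φ _
    have h1 : Subsingleton (∀ i : Fin 0, Fin (t i) → M (g i)) :=
      ⟨fun f g' => funext fun i => i.elim0⟩
    have : Subsingleton (Module.End A (∀ i : Fin 0, Fin (t i) → M (g i))) :=
      ⟨fun f g' => LinearMap.ext fun v => Subsingleton.elim _ _⟩
    rw [Subsingleton.elim φ 1]
    exact isUnit_one
  | succ n IH =>
    intro g hg t φ hφ
    set E : (∀ i : Fin (n+1), Fin (t i) → M (g i)) ≃ₗ[A]
        (Fin (t 0) → M (g 0)) × (∀ i : Fin n, Fin (t i.succ) → M (g i.succ)) := peel with hE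
    set φ' := E.toLinearMap ∘ₗ φ ∘ₗ E.symm.toLinearMap with hφ'
    rw [← isUnit_conj E φ]
    have hA : fst A _ _ ∘ₗ φ' ∘ₗ inl A _ _ = ent φ 0 0 := by
      apply LinearMap.ext; intro v
      simp [hφ', hE, cons_zero_single, ent]
    have ha := hφ 0
    apply schur_isUnit φ' ↑ha.unit⁻¹
    · rw [hA]; exact ha.mul_val_inv
    · rw [hA]; exact ha.val_inv_mul
    · set bb := fst A (Fin (t 0) → M (g 0)) (∀ i : Fin n, Fin (t i.succ) → M (g i.succ))
        ∘ₗ φ' ∘ₗ inr A _ _ with hbb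
      set cc := snd A (Fin (t 0) → M (g 0)) (∀ i : Fin n, Fin (t i.succ) → M (g i.succ))
        ∘ₗ φ' ∘ₗ inl A _ _ with hcc
      set dd := snd A (Fin (t 0) → M (g 0)) (∀ i : Fin n, Fin (t i.succ) → M (g i.succ))
        ∘ₗ φ' ∘ₗ inr A _ _ with hdd
      have hddent : ∀ j : Fin n, ent dd j j = ent φ j.succ j.succ := by
        intro j
        apply LinearMap.ext; intro v
        simp [hdd, hφ', hE, ent, cons_single_succ]
      have hccbb : ∀ j : Fin n,
          ent (cc ∘ₗ (↑ha.unit⁻¹ : Module.End A (Fin (t 0) → M (g 0))) ∘ₗ bb) j j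
          = (ent φ j.succ 0 ∘ₗ (↑ha.unit⁻¹ : Module.End A (Fin (t 0) → M (g 0))))
            ∘ₗ ent φ 0 j.succ := by
        intro j
        apply LinearMap.ext; intro v
        simp [hcc, hbb, hφ', hE, ent, cons_single_succ, cons_zero_single]
      apply IH (g ∘ Fin.succ) (hg.comp (Fin.succ_injective n)) (fun j => t j.succ)
      intro j
      have hsplit : ent (dd - cc ∘ₗ (↑ha.unit⁻¹ : Module.End A (Fin (t 0) → M (g 0))) ∘ₗ bb) j j
          = ent φ j.succ j.succ
            + (- ((ent φ j.succ 0 ∘ₗ (↑ha.unit⁻¹ : Module.End A (Fin (t 0) → M (g 0))))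
              ∘ₗ ent φ 0 j.succ)) := by
        rw [ent_sub, hddent, hccbb]
        abel
      rw [hsplit]
      apply blk_unit_add_sm hind (hφ j.succ)
      intro a b
      rw [show (- ((ent φ j.succ 0 ∘ₗ (↑ha.unit⁻¹ : Module.End A (Fin (t 0) → M (g 0))))
          ∘ₗ ent φ 0 j.succ)) = -(((ent φ j.succ 0 ∘ₗ (↑ha.unit⁻¹ :
            Module.End A (Fin (t 0) → M (g 0)))) ∘ₗ ent φ 0 j.succ)) from rfl, ent_neg,
        IsUnit.neg_iff]
      exact sm_of_cross hind hnoniso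
        (fun h => Fin.succ_ne_zero j (hg h)) _ (ent φ 0 j.succ) a b

end Main3

section Count
variable {A : Type} [Ring A] {r : ℕ} {N : Fin r → Type}
  [∀ i, AddCommGroup (N i)] [∀ i, Module A (N i)]

def OffP (r : ℕ) : Type := {p : Fin r × Fin r // p.1 ≠ p.2}

instance : Fintype (OffP r) := by unfold OffP; infer_instance

def asm (d : ∀ i, Module.End A (N i)) (O : ∀ i j, N j →ₗ[A] N i) :
    Module.End A (∀ i, N i) :=
  (∑ i, single A N i ∘ₗ d i ∘ₗ proj i) + ∑ i, ∑ j, single A N i ∘ₗ O i j ∘ₗ proj j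

lemma asm_apply (d : ∀ i, Module.End A (N i)) (O : ∀ i j, N j →ₗ[A] N i)
    (x : ∀ i, N i) (a : Fin r) :
    asm d O x a = d a (x a) + ∑ j, O a j (x j) := by
  unfold asm
  simp only [LinearMap.add_apply, LinearMap.sum_apply, LinearMap.comp_apply, proj_apply,
    single_apply, Pi.add_apply]
  rw [Finset.sum_apply, Finset.sum_apply]
  congr 1
  · rw [Finset.sum_eq_single a]
    · exact Pi.single_eq_same a _
    · intro i _ hia
      exact Pi.single_eq_of_ne (Ne.symm hia) _
    · intro h
      exact absurd (Finset.mem_univ a) h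
  · have hterm : ∀ i, (∑ j, Pi.single i (O i j (x j)) : ∀ i, N i) a
        = if i = a then ∑ j, O a j (x j) else 0 := by
      intro i
      rw [Finset.sum_apply]
      rcases eq_or_ne i a with rfl | h
      · simp
      · simp [Pi.single_eq_of_ne (Ne.symm h), h]
    rw [Finset.sum_congr rfl fun i _ => hterm i, Finset.sum_ite_eq' Finset.univ a]
    simp

lemma ent_asm_diag (d : ∀ i, Module.End A (N i)) (O : ∀ i j, N j →ₗ[A] N i)
    (hO : ∀ i, O i i = 0) (i : Fin r) : ent (asm d O) i i = d i := by
  apply LinearMap.ext; intro v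
  rw [ent_apply, asm_apply]
  rw [Pi.single_eq_same]
  have : ∑ j, O i j (Pi.single i v j) = 0 := by
    apply Finset.sum_eq_zero
    intro j _
    rcases eq_or_ne j i with rfl | h
    · rw [hO]; simp
    · rw [Pi.single_eq_of_ne h, map_zero]
  rw [this, add_zero]

lemma ent_asm_off (d : ∀ i, Module.End A (N i)) (O : ∀ i j, N j →ₗ[A] N i)
    {a b : Fin r} (hab : a ≠ b) : ent (asm d O) a b = O a b := by
  apply LinearMap.ext; intro v
  rw [ent_apply, asm_apply]
  rw [Pi.single_eq_of_ne hab, map_zero, zero_add]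
  rw [Finset.sum_eq_single b]
  · rw [Pi.single_eq_same]
  · intro j _ hjb
    rw [Pi.single_eq_of_ne hjb, map_zero]
  · intro h
    exact absurd (Finset.mem_univ b) h

lemma asm_recon (φ : Module.End A (∀ i, N i)) :
    asm (fun i => ent φ i i) (fun i j => if h : i ≠ j then ent φ i j else 0) = φ := by
  apply LinearMap.ext; intro x
  funext a
  rw [asm_apply]
  have hx : φ x = ∑ j, φ (Pi.single j (x j)) := by
    conv_lhs => rw [← Finset.univ_sum_single x]
    rw [map_sum]
  have hxa : φ x a = ∑ j, ent φ a j (x j) := by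
    rw [hx, Finset.sum_apply]
    rfl
  rw [hxa]
  have hsplit : ∀ j : Fin r, ent φ a j (x j)
      = (if a = j then ent φ a j (x j) else 0)
        + (if h : a ≠ j then ent φ a j else 0) (x j) := by
    intro j
    rcases eq_or_ne a j with rfl | h
    · simp
    · simp [h]
  rw [Finset.sum_congr rfl fun j _ => hsplit j, Finset.sum_add_distrib,
    Finset.sum_ite_eq Finset.univ a]
  simp

end Count

noncomputable def unitsTypeEquiv (R : Type*) [Monoid R] : {u : R // IsUnit u} ≃ Rˣ where
  toFun u := u.2.unit
  invFun v := ⟨v, v.isUnit⟩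
  left_inv u := Subtype.ext u.2.unit_spec
  right_inv v := Units.ext (IsUnit.unit_spec _)

section Count2
variable {A : Type} [Ring A] {r : ℕ} {N : Fin r → Type}
  [∀ i, AddCommGroup (N i)] [∀ i, Module A (N i)]

noncomputable def unitsBlocksEquiv :
    {φ : Module.End A (∀ i, N i) // ∀ i, IsUnit (ent φ i i)} ≃
      ((∀ i, {u : Module.End A (N i) // IsUnit u}) × (∀ p : OffP r, N p.1.2 →ₗ[A] N p.1.1)) where
  toFun φ := (fun i => ⟨ent φ.1 i i, φ.2 i⟩, fun p => ent φ.1 p.1.1 p.1.2)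
  invFun x := ⟨asm (fun i => (x.1 i).1) (fun i j => if h : i ≠ j then x.2 ⟨(i,j), h⟩ else 0),
    fun i => by
      rw [ent_asm_diag _ _ (fun i => by simp)]
      exact (x.1 i).2⟩
  left_inv φ := by
    apply Subtype.ext
    exact asm_recon φ.1
  right_inv x := by
    refine Prod.ext ?_ ?_
    · funext i
      apply Subtype.ext
      show ent (asm _ _) i i = (x.1 i).1
      rw [ent_asm_diag _ _ (fun i => by simp)]
    · funext p
      show ent (asm _ _) p.1.1 p.1.2 = x.2 p
      rw [ent_asm_off _ _ p.2, dif_pos p.2]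
      rfl

lemma card_aut_eq
    (hiff : ∀ φ : Module.End A (∀ i, N i), IsUnit φ ↔ ∀ i, IsUnit (ent φ i i)) :
    Nat.card ((∀ i, N i) ≃ₗ[A] (∀ i, N i))
      = Nat.card (∀ p : OffP r, N p.1.2 →ₗ[A] N p.1.1) * ∏ i, Nat.card ((N i) ≃ₗ[A] (N i)) := by
  have e1 : ((∀ i, N i) ≃ₗ[A] (∀ i, N i)) ≃ (Module.End A (∀ i, N i))ˣ :=
    (LinearMap.GeneralLinearGroup.generalLinearEquiv A (∀ i, N i)).toEquiv.symm
  have e2 : (Module.End A (∀ i, N i))ˣ ≃ {φ : Module.End A (∀ i, N i) // IsUnit φ} :=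
    (unitsTypeEquiv _).symm
  have e3 : {φ : Module.End A (∀ i, N i) // IsUnit φ}
      ≃ {φ : Module.End A (∀ i, N i) // ∀ i, IsUnit (ent φ i i)} :=
    Equiv.subtypeEquivRight (fun φ => hiff φ)
  have e5 : ∀ i, {u : Module.End A (N i) // IsUnit u} ≃ ((N i) ≃ₗ[A] (N i)) :=
    fun i => (unitsTypeEquiv _).trans
      (LinearMap.GeneralLinearGroup.generalLinearEquiv A (N i)).toEquiv
  rw [Nat.card_congr (((e1.trans e2).trans e3).trans unitsBlocksEquiv), Nat.card_prod,
    mul_comm]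
  congr 1
  rw [Nat.card_congr (Equiv.piCongrRight e5), Nat.card_pi]

end Count2

def homPiEquiv {A : Type} [Ring A] {X : Type} [AddCommGroup X] [Module A X]
    {n : ℕ} {Y : Type} [AddCommGroup Y] [Module A Y] :
    (X →ₗ[A] (Fin n → Y)) ≃ (Fin n → (X →ₗ[A] Y)) where
  toFun f a := proj a ∘ₗ f
  invFun g := LinearMap.pi g
  left_inv f := by apply LinearMap.ext; intro x; funext a; rfl
  right_inv g := by funext a; apply LinearMap.ext; intro x; rfl

/-- Let `k` be a finite field with `q` elements, `A` a finite-dimensional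
`k`-algebra, and `M₁, ..., M_r` pairwise non-isomorphic indecomposable finite-dimensional
`A`-modules, `s₁, ..., s_r` positive integers, and `M = ⊕ᵢ Mᵢ^{⊕sᵢ}`. Then
`|Aut_A(M)| = q^S * ∏ᵢ |Aut_A(Mᵢ^{⊕sᵢ})|` where
`S = Σ_{i≠j} sᵢ sⱼ dim_k Hom_A(Mᵢ, Mⱼ)`. -/
theorem stmt1 (k : Type) [Field k] [Fintype k] (q : ℕ) (hq : Fintype.card k = q)
    (A : Type) [Ring A] [Algebra k A] [FiniteDimensional k A]
    (r : ℕ) (M : Fin r → Type)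
    [∀ i, AddCommGroup (M i)] [∀ i, Module k (M i)] [∀ i, Module A (M i)]
    [∀ i, IsScalarTower k A (M i)] [∀ i, SMulCommClass k A (M i)]
    [∀ i, FiniteDimensional k (M i)]
    (hnontriv : ∀ i, Nontrivial (M i))
    (hind : ∀ i, ∀ N₁ N₂ : Submodule A (M i), IsCompl N₁ N₂ → N₁ = ⊥ ∨ N₂ = ⊥)
    (hnoniso : ∀ i j, i ≠ j → IsEmpty (M i ≃ₗ[A] M j))
    (s : Fin r → ℕ) (hs : ∀ i, 0 < s i)
    (S : ℕ)
    (hS : S = ∑ i, ∑ j, if i ≠ j then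
      s i * s j * Module.finrank k (M i →ₗ[A] M j) else 0) :
    Nat.card ((∀ i, Fin (s i) → M i) ≃ₗ[A] (∀ i, Fin (s i) → M i)) =
      q ^ S * ∏ i, Nat.card ((Fin (s i) → M i) ≃ₗ[A] (Fin (s i) → M i)) := by
  classical
  haveI : ∀ i, Finite (M i) := fun i => Module.finite_of_finite k
  haveI : ∀ i, Nontrivial (M i) := hnontriv
  have hiff : ∀ φ : Module.End A (∀ i, Fin (s i) → M i),
      IsUnit φ ↔ ∀ i, IsUnit (ent φ i i) := by
    intro φ
    constructor
    · intro h i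
      exact key_fwd hind hnoniso (_root_.id : Fin r → Fin r) Function.injective_id s φ h i
    · intro h
      exact key_bwd hind hnoniso (_root_.id : Fin r → Fin r) Function.injective_id s φ h
  have hmain := card_aut_eq (A := A) (N := fun i => Fin (s i) → M i) hiff
  rw [hmain]
  congr 1
  -- card of the off-diagonal part equals q ^ S
  rw [Nat.card_pi]
  -- cardinality of each Hom space
  have hcard : ∀ i j : Fin r,
      Nat.card ((Fin (s j) → M j) →ₗ[A] (Fin (s i) → M i))
        = q ^ (s i * s j * Module.finrank k (M j →ₗ[A] M i)) := by
    intro i j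
    haveI : FiniteDimensional k (M j →ₗ[A] M i) :=
      FiniteDimensional.of_injective
        (LinearMap.restrictScalarsₗ k A (M j) (M i) k)
        (LinearMap.restrictScalars_injective k)
    haveI : Finite (M j →ₗ[A] M i) := Module.finite_of_finite k
    have h1 : Nat.card ((Fin (s j) → M j) →ₗ[A] (Fin (s i) → M i))
        = Nat.card (Fin (s j) → Fin (s i) → (M j →ₗ[A] M i)) := by
      refine Nat.card_congr ?_
      refine ((LinearMap.lsum A (fun _ : Fin (s j) => M j) ℕ).symm.toEquiv).trans ?_
      exact Equiv.piCongrRight fun _ => homPiEquiv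
    have h2 : Nat.card (M j →ₗ[A] M i) = q ^ Module.finrank k (M j →ₗ[A] M i) := by
      haveI : Fintype (M j →ₗ[A] M i) := Fintype.ofFinite _
      rw [Nat.card_eq_fintype_card, Module.card_eq_pow_finrank (K := k), hq]
    rw [h1, Nat.card_fun, Nat.card_fun, Nat.card_eq_fintype_card (α := Fin (s i)),
      Nat.card_eq_fintype_card (α := Fin (s j)), Fintype.card_fin, Fintype.card_fin, h2,
      ← pow_mul, ← pow_mul]
    ring_nf
  rw [Finset.prod_congr rfl fun p _ => hcard p.1.1 p.1.2]
  -- convert the product over off-diagonal pairs to the double sum S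
  have hsub : ∏ p : OffP r, q ^ (s p.1.1 * s p.1.2 * Module.finrank k (M p.1.2 →ₗ[A] M p.1.1))
      = ∏ p ∈ Finset.univ.filter (fun p : Fin r × Fin r => p.1 ≠ p.2),
          q ^ (s p.1 * s p.2 * Module.finrank k (M p.2 →ₗ[A] M p.1)) := by
    refine (Finset.prod_subtype _ ?_ (fun p : Fin r × Fin r =>
        q ^ (s p.1 * s p.2 * Module.finrank k (M p.2 →ₗ[A] M p.1)))).symm
    intro x
    simp
  rw [hsub, Finset.prod_filter]
  have hpow : ∀ p : Fin r × Fin r,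
      (if p.1 ≠ p.2 then q ^ (s p.1 * s p.2 * Module.finrank k (M p.2 →ₗ[A] M p.1)) else 1)
      = q ^ (if p.1 ≠ p.2 then s p.1 * s p.2 * Module.finrank k (M p.2 →ₗ[A] M p.1) else 0) := by
    intro p
    split <;> simp
  rw [Finset.prod_congr rfl fun p _ => hpow p, Finset.prod_pow_eq_pow_sum]
  congr 1
  rw [hS, Fintype.sum_prod_type]
  rw [Finset.sum_comm]
  apply Finset.sum_congr rfl
  intro i _
  apply Finset.sum_congr rfl
  intro j _
  rcases eq_or_ne i j with rfl | h
  · simp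
  · rw [if_pos (Ne.symm h), if_pos h, mul_comm (s j) (s i)]
end

section
/- (Riedtmann–Peng formula.) Let k be a finite field, A a finite-dimensional k-algebra, and M, N, G finite-dimensional A-modules. Let W(M,N;G) be the set of pairs (f, p) with f : N → G injective A-linear, p : G → M surjective A-linear, and image of f equal to kernel of p; the group Aut_A(G) acts on W(M,N;G) by h·(f, p) = (h∘f, p∘h⁻¹). Then |Aut_A(G)| · (number of Aut_A(G)-orbits on W(M,N;G)) = g^{G}_{M,N} · |Aut_A(M)| · |Aut_A(N)| · |Hom_A(M, N)|; equivalently, g^{G}_{M,N} = |Aut_A(G)| · |Ext_A(M,N)_{G}| / (|Aut_A(M)| · |Aut_A(N)| · |Hom_A(M,N)|), where |Ext_A(M,N)_{G}| is the number of equivalence classes of short exact sequences 0 → N → G → M → 0 (two such sequences being equivalent iff they differ by an automorphism of G compatible with the identity maps on M and N). -/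
/-!
Let `W = W(M,N;G)`. The automorphisms of `G` fixing a short exact sequence `(f, p)` are exactly
the maps `1 + f ∘ s ∘ p` with `s : M → N` (they are unipotent because `p ∘ f = 0`), so every
stabilizer of the `Aut(G)`-action on `W` has `|Hom(M, N)|` elements and the orbit-stabilizer
theorem gives `|Aut G| · #(W / Aut G) = |W| · |Hom(M, N)|`. On the other hand `(f, p) ↦ range f`
maps `W` onto the submodules `B ≅ N` with `G/B ≅ M`, and its fibre over `B` is in bijection with
`Iso(N, B) × Iso(G/B, M)`, a set with `|Aut N| · |Aut M|` elements.
-/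

open MulAction

theorem MulAction.card_mul_card_orbits_of_card_stabilizer {G X : Type*} [Group G] [MulAction G X]
    [Finite G] [Finite X] {c : ℕ} (hc : ∀ x : X, Nat.card (stabilizer G x) = c) :
    Nat.card G * Nat.card (orbitRel.Quotient G X) = Nat.card X * c := by
  have := Fintype.ofFinite (orbitRel.Quotient G X)
  rw [Nat.card_congr (selfEquivSigmaOrbitsQuotientStabilizer G X), Nat.card_sigma,
    Finset.sum_mul, Nat.card_eq_fintype_card (α := orbitRel.Quotient G X), ← Finset.card_univ,
    mul_comm, ← smul_eq_mul, ← Finset.sum_const]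
  refine Finset.sum_congr rfl fun ω _ => ?_
  rw [← hc ω.out, ← Subgroup.card_eq_card_quotient_mul_card_subgroup]

section LinearAlgebra

variable {R M N P : Type*} [Ring R] [AddCommGroup M] [Module R M] [AddCommGroup N] [Module R N]
  [AddCommGroup P] [Module R P]

namespace LinearMap

theorem exists_comp_eq_of_ker_le {p : M →ₗ[R] N} (hp : Function.Surjective p) {u : M →ₗ[R] P}
    (h : ker p ≤ ker u) : ∃ v : N →ₗ[R] P, v ∘ₗ p = u :=
  ⟨(ker p).liftQ u h ∘ₗ (p.quotKerEquivOfSurjective hp).symm.toLinearMap, by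
    ext x
    simp [quotKerEquivOfSurjective_symm_apply]⟩

theorem exists_comp_eq_of_range_le {f : M →ₗ[R] N} (hf : Function.Injective f) {v : P →ₗ[R] N}
    (h : range v ≤ range f) : ∃ s : P →ₗ[R] M, f ∘ₗ s = v :=
  ⟨(LinearEquiv.ofInjective f hf).symm.toLinearMap ∘ₗ v.codRestrict (range f) (h ⟨·, rfl⟩), by
    ext x
    simp [LinearEquiv.ofInjective_symm_apply]⟩

noncomputable def injectiveRangeEqEquiv (B : Submodule R N) :
    {f : M →ₗ[R] N // Function.Injective f ∧ range f = B} ≃ (M ≃ₗ[R] B) where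
  toFun f := (LinearEquiv.ofInjective f.1 f.2.1).trans (LinearEquiv.ofEq _ _ f.2.2)
  invFun e := ⟨B.subtype ∘ₗ e.toLinearMap, B.injective_subtype.comp e.injective, by
    rw [range_comp, LinearEquiv.range, Submodule.map_top, Submodule.range_subtype]⟩
  left_inv f := by ext; simp
  right_inv e := by ext; simp

noncomputable def surjectiveKerEqEquiv (B : Submodule R M) :
    {p : M →ₗ[R] N // Function.Surjective p ∧ ker p = B} ≃ ((M ⧸ B) ≃ₗ[R] N) where
  toFun p := (Submodule.quotEquivOfEq _ _ p.2.2.symm).trans (p.1.quotKerEquivOfSurjective p.2.1)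
  invFun q := ⟨q.toLinearMap ∘ₗ B.mkQ, q.surjective.comp B.mkQ_surjective, by
    rw [LinearEquiv.ker_comp, Submodule.ker_mkQ]⟩
  left_inv p := by ext; simp
  right_inv q := by ext x; induction x using Submodule.Quotient.induction_on; simp

end LinearMap

theorem LinearEquiv.card_equiv_congr_left (e : M ≃ₗ[R] N) :
    Nat.card (M ≃ₗ[R] P) = Nat.card (N ≃ₗ[R] P) :=
  Nat.card_congr ⟨e.symm.trans, e.trans, fun _ => by ext; simp, fun _ => by ext; simp⟩

theorem LinearEquiv.card_equiv_congr_right (e : N ≃ₗ[R] P) :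
    Nat.card (M ≃ₗ[R] N) = Nat.card (M ≃ₗ[R] P) :=
  Nat.card_congr ⟨(·.trans e), (·.trans e.symm), fun _ => by ext; simp, fun _ => by ext; simp⟩

end LinearAlgebra

section ShortExactPair

variable (R M N G : Type*) [Ring R] [AddCommGroup M] [Module R M] [AddCommGroup N] [Module R N]
  [AddCommGroup G] [Module R G]

/-- The set `W(M,N;G)` of short exact sequences `0 → N → G → M → 0`. -/
abbrev ShortExactPair :=
  {fp : (N →ₗ[R] G) × (G →ₗ[R] M) //
    Function.Injective fp.1 ∧ Function.Surjective fp.2 ∧ LinearMap.range fp.1 = LinearMap.ker fp.2}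

variable {R M N G}

namespace ShortExactPair

theorem snd_apply_fst_apply (w : ShortExactPair R M N G) (n : N) : w.1.2 (w.1.1 n) = 0 :=
  LinearMap.mem_ker.1 (w.2.2.2 ▸ LinearMap.mem_range_self w.1.1 n)

instance : SMul (G ≃ₗ[R] G) (ShortExactPair R M N G) where
  smul h w := ⟨(h.toLinearMap ∘ₗ w.1.1, w.1.2 ∘ₗ h.symm.toLinearMap),
    h.injective.comp w.2.1, w.2.2.1.comp h.symm.surjective, by
      rw [LinearMap.range_comp, LinearMap.ker_comp, w.2.2.2]
      exact Submodule.map_equiv_eq_comap_symm h _⟩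

theorem smul_eq_iff (h : G ≃ₗ[R] G) (w w' : ShortExactPair R M N G) :
    h • w = w' ↔ h.toLinearMap ∘ₗ w.1.1 = w'.1.1 ∧ w.1.2 ∘ₗ h.symm.toLinearMap = w'.1.2 := by
  rw [Subtype.ext_iff, Prod.ext_iff]
  rfl

instance : MulAction (G ≃ₗ[R] G) (ShortExactPair R M N G) where
  one_smul _ := rfl
  mul_smul _ _ _ := rfl

theorem orbitRel_iff (w w' : ShortExactPair R M N G) :
    orbitRel (G ≃ₗ[R] G) _ w w' ↔ ∃ h : G ≃ₗ[R] G,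
      h.toLinearMap ∘ₗ w.1.1 = w'.1.1 ∧ w.1.2 ∘ₗ h.symm.toLinearMap = w'.1.2 := by
  rw [Setoid.comm', orbitRel_apply, mem_orbit_iff]
  simp only [smul_eq_iff]

theorem mem_stabilizer_iff {w : ShortExactPair R M N G} {h : G ≃ₗ[R] G} :
    h ∈ stabilizer (G ≃ₗ[R] G) w ↔ (∀ n, h (w.1.1 n) = w.1.1 n) ∧ ∀ x, w.1.2 (h x) = w.1.2 x := by
  rw [MulAction.mem_stabilizer_iff, smul_eq_iff, LinearMap.ext_iff, LinearMap.ext_iff]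
  exact and_congr Iff.rfl ⟨fun H x => by simpa using (H (h x)).symm,
    fun H x => by simpa using (H (h.symm x)).symm⟩

noncomputable def unipotentAut (w : ShortExactPair R M N G) (s : M →ₗ[R] N) : G ≃ₗ[R] G :=
  LinearEquiv.ofLinearMap (LinearMap.id + w.1.1 ∘ₗ s ∘ₗ w.1.2) (LinearMap.id - w.1.1 ∘ₗ s ∘ₗ w.1.2)
    (by ext x; simp [snd_apply_fst_apply]) (by ext x; simp [snd_apply_fst_apply])

theorem unipotentAut_apply (w : ShortExactPair R M N G) (s : M →ₗ[R] N) (x : G) :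
    unipotentAut w s x = x + w.1.1 (s (w.1.2 x)) := rfl

theorem unipotentAut_mem_stabilizer (w : ShortExactPair R M N G) (s : M →ₗ[R] N) :
    unipotentAut w s ∈ stabilizer (G ≃ₗ[R] G) w :=
  mem_stabilizer_iff.2 ⟨fun n => by simp [unipotentAut_apply, snd_apply_fst_apply],
    fun x => by simp [unipotentAut_apply, snd_apply_fst_apply]⟩

theorem exists_eq_fst_comp_comp_snd (w : ShortExactPair R M N G) {u : G →ₗ[R] G}
    (hu₁ : ∀ n, u (w.1.1 n) = 0) (hu₂ : ∀ x, w.1.2 (u x) = 0) :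
    ∃ s : M →ₗ[R] N, ∀ x, w.1.1 (s (w.1.2 x)) = u x := by
  obtain ⟨v, hv⟩ := LinearMap.exists_comp_eq_of_ker_le w.2.2.1 (u := u) <| by
    rw [← w.2.2.2]
    rintro _ ⟨n, rfl⟩
    exact hu₁ n
  obtain ⟨s, hs⟩ := LinearMap.exists_comp_eq_of_range_le w.2.1 (v := v) <| by
    rintro _ ⟨m, rfl⟩
    obtain ⟨x, rfl⟩ := w.2.2.1 m
    rw [w.2.2.2, LinearMap.mem_ker, ← LinearMap.comp_apply v, hv]
    exact hu₂ x
  exact ⟨s, fun x => by rw [← hv, ← hs]; rfl⟩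

theorem bijective_unipotentAut (w : ShortExactPair R M N G) :
    Function.Bijective fun s : M →ₗ[R] N =>
      (⟨unipotentAut w s, unipotentAut_mem_stabilizer w s⟩ : stabilizer (G ≃ₗ[R] G) w) := by
  refine ⟨fun s s' hss => ?_, fun ⟨h, hh⟩ => ?_⟩
  · ext m
    obtain ⟨x, rfl⟩ := w.2.2.1 m
    apply w.2.1
    simpa [unipotentAut_apply] using LinearEquiv.congr_fun (congrArg Subtype.val hss) x
  · obtain ⟨hf, hp⟩ := mem_stabilizer_iff.1 hh
    obtain ⟨s, hs⟩ := exists_eq_fst_comp_comp_snd w (u := h.toLinearMap - LinearMap.id)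
      (fun n => by simp [hf]) (fun x => by simp [hp])
    refine ⟨s, Subtype.ext (LinearEquiv.ext fun x => ?_)⟩
    simp [unipotentAut_apply, hs]

theorem card_stabilizer (w : ShortExactPair R M N G) :
    Nat.card (stabilizer (G ≃ₗ[R] G) w) = Nat.card (M →ₗ[R] N) :=
  (Nat.card_congr (Equiv.ofBijective _ (bijective_unipotentAut w))).symm

noncomputable def rangeFst (w : ShortExactPair R M N G) :
    {B : Submodule R G // Nonempty (B ≃ₗ[R] N) ∧ Nonempty ((G ⧸ B) ≃ₗ[R] M)} :=
  ⟨LinearMap.range w.1.1, ⟨(LinearMap.injectiveRangeEqEquiv _ ⟨w.1.1, w.2.1, rfl⟩).symm⟩,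
    ⟨LinearMap.surjectiveKerEqEquiv _ ⟨w.1.2, w.2.2.1, w.2.2.2.symm⟩⟩⟩

noncomputable def rangeFstFiberEquiv (B : Submodule R G) :
    {w : ShortExactPair R M N G // LinearMap.range w.1.1 = B} ≃
      (N ≃ₗ[R] B) × ((G ⧸ B) ≃ₗ[R] M) :=
  (Equiv.subtypeSubtypeEquivSubtypeInter _ (fun fp => LinearMap.range fp.1 = B)).trans <|
    (Equiv.subtypeEquivRight fun fp => by
      constructor
      · rintro ⟨⟨hf, hp, hfp⟩, rfl⟩
        exact ⟨⟨hf, rfl⟩, hp, hfp.symm⟩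
      · rintro ⟨⟨hf, rfl⟩, hp, hpf⟩
        exact ⟨⟨hf, hp, hpf.symm⟩, rfl⟩).trans <|
    Equiv.subtypeProdEquivProd.trans <|
      (LinearMap.injectiveRangeEqEquiv B).prodCongr (LinearMap.surjectiveKerEqEquiv B)

theorem card_rangeFst_fiber
    (B : {B : Submodule R G // Nonempty (B ≃ₗ[R] N) ∧ Nonempty ((G ⧸ B) ≃ₗ[R] M)}) :
    Nat.card {w : ShortExactPair R M N G // rangeFst w = B} =
      Nat.card (M ≃ₗ[R] M) * Nat.card (N ≃ₗ[R] N) := by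
  obtain ⟨B, ⟨eN⟩, ⟨eM⟩⟩ := B
  rw [Nat.card_congr ((Equiv.subtypeEquivRight fun w => Subtype.ext_iff).trans
    (rangeFstFiberEquiv B)), Nat.card_prod, eN.card_equiv_congr_right, eM.card_equiv_congr_left,
    mul_comm]

theorem card_eq [Finite G] [Finite M] [Finite N] :
    Nat.card (ShortExactPair R M N G) =
      Nat.card {B : Submodule R G // Nonempty (B ≃ₗ[R] N) ∧ Nonempty ((G ⧸ B) ≃ₗ[R] M)} *
        (Nat.card (M ≃ₗ[R] M) * Nat.card (N ≃ₗ[R] N)) := by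
  have : Finite (N →ₗ[R] G) := FunLike.finite _
  have : Finite (G →ₗ[R] M) := FunLike.finite _
  have := Fintype.ofFinite {B : Submodule R G // Nonempty (B ≃ₗ[R] N) ∧ Nonempty ((G ⧸ B) ≃ₗ[R] M)}
  rw [← Nat.card_congr (Equiv.sigmaFiberEquiv rangeFst), Nat.card_sigma]
  simp [card_rangeFst_fiber]

end ShortExactPair

end ShortExactPair

theorem stmt5_general (k : Type) [Field k] [Fintype k]
    (A : Type) [Ring A]
    (M N G : Type)
    [AddCommGroup M] [Module k M] [Module A M] [FiniteDimensional k M]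
    [AddCommGroup N] [Module k N] [Module A N] [FiniteDimensional k N]
    [AddCommGroup G] [Module k G] [Module A G] [FiniteDimensional k G]
    (g : ℕ)
    (hg : g = Nat.card {B : Submodule A G //
      Nonempty (B ≃ₗ[A] N) ∧ Nonempty ((G ⧸ B) ≃ₗ[A] M)})
    (rel : {fp : (N →ₗ[A] G) × (G →ₗ[A] M) //
        Function.Injective fp.1 ∧ Function.Surjective fp.2 ∧
          LinearMap.range fp.1 = LinearMap.ker fp.2} →
      {fp : (N →ₗ[A] G) × (G →ₗ[A] M) //
        Function.Injective fp.1 ∧ Function.Surjective fp.2 ∧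
          LinearMap.range fp.1 = LinearMap.ker fp.2} → Prop)
    (hrel : ∀ w w', rel w w' ↔ ∃ h : G ≃ₗ[A] G,
      (h.toLinearMap ∘ₗ w.1.1 = w'.1.1) ∧ (w.1.2 ∘ₗ h.symm.toLinearMap = w'.1.2)) :
    Nat.card (G ≃ₗ[A] G) * Nat.card (Quot rel) =
      g * Nat.card (M ≃ₗ[A] M) * Nat.card (N ≃ₗ[A] N) * Nat.card (M →ₗ[A] N) := by
  have : Finite M := Module.finite_of_finite k
  have : Finite N := Module.finite_of_finite k
  have : Finite G := Module.finite_of_finite k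
  have : Finite (G ≃ₗ[A] G) := FunLike.finite _
  have : Finite (N →ₗ[A] G) := FunLike.finite _
  have : Finite (G →ₗ[A] M) := FunLike.finite _
  have horbits : Nat.card (Quot rel) =
      Nat.card (orbitRel.Quotient (G ≃ₗ[A] G) (ShortExactPair A M N G)) :=
    Nat.card_congr <| Quot.congrRight fun w w' =>
      (hrel w w').trans (ShortExactPair.orbitRel_iff w w').symm
  rw [horbits, card_mul_card_orbits_of_card_stabilizer ShortExactPair.card_stabilizer,
    ShortExactPair.card_eq, hg]
  ring

/-- **Riedtmann–Peng formula.** Let `k` be a finite field, `A` a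
finite-dimensional `k`-algebra and `M, N, G` finite-dimensional `A`-modules. Let
`W(M,N;G)` be the set of pairs `(f, p)` with `f : N → G` injective, `p : G → M` surjective
and `range f = ker p`, on which `Aut_A(G)` acts by `h · (f, p) = (h∘f, p∘h⁻¹)`. Then
`|Aut_A(G)| * #orbits = g^G_{M,N} * |Aut_A(M)| * |Aut_A(N)| * |Hom_A(M,N)|`, i.e.
`g^G_{M,N} = |Aut_A(G)| * |Ext_A(M,N)_G| / (|Aut_A(M)| * |Aut_A(N)| * |Hom_A(M,N)|)`,
where `|Ext_A(M,N)_G|` is the number of equivalence classes of short exact sequences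
`0 → N → G → M → 0` (two being equivalent iff they differ by an automorphism of `G`). -/
theorem stmt5 (k : Type) [Field k] [Fintype k]
    (A : Type) [Ring A] [Algebra k A] [FiniteDimensional k A]
    (M N G : Type)
    [AddCommGroup M] [Module k M] [Module A M] [IsScalarTower k A M] [FiniteDimensional k M]
    [AddCommGroup N] [Module k N] [Module A N] [IsScalarTower k A N] [FiniteDimensional k N]
    [AddCommGroup G] [Module k G] [Module A G] [IsScalarTower k A G] [FiniteDimensional k G]
    (g : ℕ)
    (hg : g = Nat.card {B : Submodule A G //
      Nonempty (B ≃ₗ[A] N) ∧ Nonempty ((G ⧸ B) ≃ₗ[A] M)})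
    (rel : {fp : (N →ₗ[A] G) × (G →ₗ[A] M) //
        Function.Injective fp.1 ∧ Function.Surjective fp.2 ∧
          LinearMap.range fp.1 = LinearMap.ker fp.2} →
      {fp : (N →ₗ[A] G) × (G →ₗ[A] M) //
        Function.Injective fp.1 ∧ Function.Surjective fp.2 ∧
          LinearMap.range fp.1 = LinearMap.ker fp.2} → Prop)
    (hrel : ∀ w w', rel w w' ↔ ∃ h : G ≃ₗ[A] G,
      (h.toLinearMap ∘ₗ w.1.1 = w'.1.1) ∧ (w.1.2 ∘ₗ h.symm.toLinearMap = w'.1.2)) :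
    Nat.card (G ≃ₗ[A] G) * Nat.card (Quot rel) =
      g * Nat.card (M ≃ₗ[A] M) * Nat.card (N ≃ₗ[A] N) * Nat.card (M →ₗ[A] N) :=
  stmt5_general k A M N G g hg rel hrel
end

section
/- Let k be a finite field, A a finite-dimensional k-algebra, and M, N finite-dimensional A-modules such that every short exact sequence of A-modules 0 → N → E → M → 0 splits (i.e., whenever f : N → E is an injective A-linear map into a finite-dimensional A-module E with E/f(N) ≅ M, the image of f is a direct summand of E). Then the number of A-submodules B of M ⊕ N with B ≅ N and (M ⊕ N)/B ≅ M is g^{M⊕N}_{M,N} = |Aut_A(M ⊕ N)| / (|Aut_A(M)| · |Aut_A(N)| · |Hom_A(M, N)|); that is, g^{M⊕N}_{M,N} · |Aut_A(M)| · |Aut_A(N)| · |Hom_A(M, N)| = |Aut_A(M ⊕ N)|. -/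
/-!
The automorphism group of `M × N` acts on the monomorphisms `N → M × N` with cokernel `≅ M`.
Since every such monomorphism splits, the action is transitive, so this set is the orbit of
`inr`. The stabilizer of `inr` consists of the triangular automorphisms `(m, n) ↦ (α m, γ m + n)`
and is therefore in bijection with `Aut M × Hom(M, N)`. On the other hand, a monomorphism is
determined by its image `B`, a submodule counted by the Hall number, together with an
isomorphism `N ≅ B`, of which there are `|Aut N|`. Orbit–stabilizer then gives the formula.
-/

section

variable (A : Type*) [Ring A]
variable (M N E : Type*) [AddCommGroup M] [Module A M] [AddCommGroup N] [Module A N]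
  [AddCommGroup E] [Module A E]

def monosWithCokernel : Set (N →ₗ[A] E) :=
  {f | Function.Injective f ∧ Nonempty ((E ⧸ LinearMap.range f) ≃ₗ[A] M)}

def hallSubmodules : Set (Submodule A E) :=
  {B | Nonempty (B ≃ₗ[A] N) ∧ Nonempty ((E ⧸ B) ≃ₗ[A] M)}

variable {A M N E}

lemma range_subtype_comp_equiv (B : Submodule A E) (e : N ≃ₗ[A] B) :
    LinearMap.range (B.subtype ∘ₗ e.toLinearMap) = B := by
  rw [LinearEquiv.range_comp, Submodule.range_subtype]

lemma subtype_comp_equiv_mem_monosWithCokernel {B : Submodule A E}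
    (hB : B ∈ hallSubmodules A M N E) (e : N ≃ₗ[A] B) :
    B.subtype ∘ₗ e.toLinearMap ∈ monosWithCokernel A M N E :=
  ⟨Subtype.val_injective.comp e.injective,
    ⟨(Submodule.quotEquivOfEq _ _ (range_subtype_comp_equiv B e)).trans hB.2.some⟩⟩

lemma card_monosWithCokernel :
    Nat.card (monosWithCokernel A M N E) =
      Nat.card (hallSubmodules A M N E) * Nat.card (N ≃ₗ[A] N) := by
  rw [← Nat.card_prod]
  symm
  let toN (B : hallSubmodules A M N E) : N ≃ₗ[A] B := B.2.1.some.symm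
  refine Nat.card_eq_of_bijective (fun p ↦ ⟨_, subtype_comp_equiv_mem_monosWithCokernel p.1.2
    (p.2.trans (toN p.1))⟩) ⟨?_, ?_⟩
  · rintro ⟨B, u⟩ ⟨B', u'⟩ h
    have hf : B.1.subtype ∘ₗ (u.trans (toN B)).toLinearMap =
        B'.1.subtype ∘ₗ (u'.trans (toN B')).toLinearMap := congrArg Subtype.val h
    obtain rfl : B = B' := Subtype.ext <| by
      rw [← range_subtype_comp_equiv B.1 (u.trans (toN B)),
        ← range_subtype_comp_equiv B'.1 (u'.trans (toN B')), hf]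
    refine Prod.ext rfl (LinearEquiv.ext fun n ↦ (toN B).injective (Subtype.ext ?_))
    exact LinearMap.congr_fun hf n
  · rintro ⟨f, hinj, hq⟩
    let B : hallSubmodules A M N E :=
      ⟨LinearMap.range f, ⟨(LinearEquiv.ofInjective f hinj).symm⟩, hq⟩
    refine ⟨(B, (LinearEquiv.ofInjective f hinj).trans (toN B).symm), Subtype.ext ?_⟩
    ext n
    simp [LinearEquiv.ofInjective_apply]

lemma exists_equiv_comp_inr_eq {f : N →ₗ[A] E} (hf : f ∈ monosWithCokernel A M N E)
    {C : Submodule A E} (hC : IsCompl (LinearMap.range f) C) :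
    ∃ e : (M × N) ≃ₗ[A] E, e.toLinearMap ∘ₗ LinearMap.inr A M N = f := by
  let eN : N ≃ₗ[A] LinearMap.range f := LinearEquiv.ofInjective f hf.1
  let eC : M ≃ₗ[A] C := hf.2.some.symm.trans (Submodule.quotientEquivOfIsCompl _ C hC)
  refine ⟨(eC.prodCongr eN).trans (Submodule.prodEquivOfIsCompl C _ hC.symm), ?_⟩
  ext n
  simp [eN, LinearEquiv.ofInjective_apply]

variable (M N) in
lemma inr_mem_monosWithCokernel : LinearMap.inr A M N ∈ monosWithCokernel A M N (M × N) :=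
  ⟨LinearMap.inr_injective, ⟨(Submodule.quotEquivOfEq _ _ (LinearMap.range_inr A M N)).trans
    ((LinearMap.fst A M N).quotKerEquivOfSurjective Prod.fst_surjective)⟩⟩

lemma equiv_comp_mem_monosWithCokernel {E' : Type*} [AddCommGroup E'] [Module A E']
    (e : E ≃ₗ[A] E') {f : N →ₗ[A] E} (hf : f ∈ monosWithCokernel A M N E) :
    e.toLinearMap ∘ₗ f ∈ monosWithCokernel A M N E' := by
  refine ⟨e.injective.comp hf.1, ⟨?_⟩⟩
  refine (Submodule.Quotient.equiv _ _ e ?_).symm.trans hf.2.some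
  rw [LinearMap.range_comp]

lemma orbit_inr_eq
    (hsplit : ∀ f ∈ monosWithCokernel A M N (M × N), ∃ C, IsCompl (LinearMap.range f) C) :
    MulAction.orbit ((M × N) ≃ₗ[A] (M × N)) (LinearMap.inr A M N) =
      monosWithCokernel A M N (M × N) := by
  ext f
  constructor
  · rintro ⟨g, rfl⟩
    exact equiv_comp_mem_monosWithCokernel g (inr_mem_monosWithCokernel M N)
  · intro hf
    obtain ⟨C, hC⟩ := hsplit f hf
    exact exists_equiv_comp_inr_eq hf hC

lemma skewProd_smul_inr (α : M ≃ₗ[A] M) (γ : M →ₗ[A] N) :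
    α.skewProd (LinearEquiv.refl A N) γ • LinearMap.inr A M N = LinearMap.inr A M N := by
  ext n <;> simp [LinearEquiv.skewProd_apply]

lemma exists_skewProd_eq_of_smul_inr {g : (M × N) ≃ₗ[A] (M × N)}
    (hg : g • LinearMap.inr A M N = LinearMap.inr A M N) :
    ∃ (α : M ≃ₗ[A] M) (γ : M →ₗ[A] N), α.skewProd (LinearEquiv.refl A N) γ = g := by
  let α : M →ₗ[A] M := LinearMap.fst A M N ∘ₗ g.toLinearMap ∘ₗ LinearMap.inl A M N
  let γ : M →ₗ[A] N := LinearMap.snd A M N ∘ₗ g.toLinearMap ∘ₗ LinearMap.inl A M N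
  have hg_apply (m : M) (n : N) : g (m, n) = (α m, γ m + n) := by
    have hinr : g (0, n) = (0, n) := LinearMap.congr_fun hg n
    calc g (m, n) = g (m, 0) + g (0, n) := by rw [← map_add, Prod.mk_add_mk, add_zero, zero_add]
      _ = (α m, γ m + n) := by rw [hinr, Prod.add_def, add_zero]; rfl
  have hα : Function.Bijective α := by
    refine ⟨fun m m' h ↦ ?_, fun m ↦ ?_⟩
    · have : g (m, -γ m + γ m') = g (m', 0) := by simp [hg_apply, h]
      exact congrArg Prod.fst (g.injective this)
    · obtain ⟨⟨m', n⟩, h⟩ := g.surjective (m, 0)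
      exact ⟨m', by simpa [hg_apply] using congrArg Prod.fst h⟩
  refine ⟨LinearEquiv.ofBijective α hα, γ, LinearEquiv.ext fun ⟨m, n⟩ ↦ ?_⟩
  simp [LinearEquiv.skewProd_apply, hg_apply, add_comm]

lemma card_stabilizer_inr :
    Nat.card (MulAction.stabilizer ((M × N) ≃ₗ[A] (M × N)) (LinearMap.inr A M N)) =
      Nat.card (M ≃ₗ[A] M) * Nat.card (M →ₗ[A] N) := by
  rw [← Nat.card_prod]
  symm
  refine Nat.card_eq_of_bijective
    (fun p ↦ ⟨p.1.skewProd (LinearEquiv.refl A N) p.2, skewProd_smul_inr p.1 p.2⟩) ⟨?_, ?_⟩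
  · rintro ⟨α, γ⟩ ⟨α', γ'⟩ h
    have h (m : M) : (α m, γ m) = (α' m, γ' m) := by
      simpa [LinearEquiv.skewProd_apply] using LinearEquiv.congr_fun (congrArg Subtype.val h) (m, 0)
    exact Prod.ext (LinearEquiv.ext fun m ↦ congrArg Prod.fst (h m))
      (LinearMap.ext fun m ↦ congrArg Prod.snd (h m))
  · rintro ⟨g, hg⟩
    obtain ⟨α, γ, rfl⟩ := exists_skewProd_eq_of_smul_inr hg
    exact ⟨(α, γ), rfl⟩

end

theorem stmt6_general (k : Type) [Field k]
    (A : Type) [Ring A] [Algebra k A]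
    (M N : Type)
    [AddCommGroup M] [Module k M] [Module A M] [IsScalarTower k A M] [FiniteDimensional k M]
    [AddCommGroup N] [Module k N] [Module A N] [IsScalarTower k A N] [FiniteDimensional k N]
    (hsplit : ∀ (E : Type) [AddCommGroup E] [Module k E] [Module A E]
      [IsScalarTower k A E] [FiniteDimensional k E] (f : N →ₗ[A] E),
      Function.Injective f → Nonempty ((E ⧸ LinearMap.range f) ≃ₗ[A] M) →
        ∃ C : Submodule A E, IsCompl (LinearMap.range f) C)
    (g : ℕ)
    (hg : g = Nat.card {B : Submodule A (M × N) //
      Nonempty (B ≃ₗ[A] N) ∧ Nonempty (((M × N) ⧸ B) ≃ₗ[A] M)}) :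
    g * Nat.card (M ≃ₗ[A] M) * Nat.card (N ≃ₗ[A] N) * Nat.card (M →ₗ[A] N) =
      Nat.card ((M × N) ≃ₗ[A] (M × N)) := by
  have horbit := orbit_inr_eq fun f hf ↦ hsplit (M × N) f hf.1 hf.2
  have key := Nat.card_congr <|
    MulAction.orbitProdStabilizerEquivGroup ((M × N) ≃ₗ[A] (M × N)) (LinearMap.inr A M N)
  rw [Nat.card_prod, horbit, card_monosWithCokernel, card_stabilizer_inr] at key
  rw [← key, hg]
  change Nat.card (hallSubmodules A M N (M × N)) * _ * _ * _ = _
  ring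

/-- Let `k` be a finite field, `A` a finite-dimensional `k`-algebra and
`M, N` finite-dimensional `A`-modules such that every short exact sequence
`0 → N → E → M → 0` splits. Then
`g^{M⊕N}_{M,N} * |Aut_A(M)| * |Aut_A(N)| * |Hom_A(M,N)| = |Aut_A(M ⊕ N)|`. -/
theorem stmt6 (k : Type) [Field k] [Fintype k]
    (A : Type) [Ring A] [Algebra k A] [FiniteDimensional k A]
    (M N : Type)
    [AddCommGroup M] [Module k M] [Module A M] [IsScalarTower k A M] [FiniteDimensional k M]
    [AddCommGroup N] [Module k N] [Module A N] [IsScalarTower k A N] [FiniteDimensional k N]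
    (hsplit : ∀ (E : Type) [AddCommGroup E] [Module k E] [Module A E]
      [IsScalarTower k A E] [FiniteDimensional k E] (f : N →ₗ[A] E),
      Function.Injective f → Nonempty ((E ⧸ LinearMap.range f) ≃ₗ[A] M) →
        ∃ C : Submodule A E, IsCompl (LinearMap.range f) C)
    (g : ℕ)
    (hg : g = Nat.card {B : Submodule A (M × N) //
      Nonempty (B ≃ₗ[A] N) ∧ Nonempty (((M × N) ⧸ B) ≃ₗ[A] M)}) :
    g * Nat.card (M ≃ₗ[A] M) * Nat.card (N ≃ₗ[A] N) * Nat.card (M →ₗ[A] N) =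
      Nat.card ((M × N) ≃ₗ[A] (M × N)) :=
  stmt6_general k A M N hsplit g hg
end

section
/- Let k be a finite field with q elements, A a finite-dimensional k-algebra, and U, V non-isomorphic indecomposable finite-dimensional A-modules. Let s, t be positive integers, M = U^{⊕s}, N = V^{⊕t}, and assume every short exact sequence of A-modules 0 → N → E → M → 0 splits. Then the number of A-submodules B of M ⊕ N with B ≅ N and (M ⊕ N)/B ≅ M equals |Hom_A(N, M)| = q^{s·t·dim_k Hom_A(V, U)}. -/
/-!
By Fitting's lemma every endomorphism of an indecomposable module of finite length is invertible
or nilpotent, so `End_A U` and `End_A V` are local rings. As `U ≇ V`, no composite `V → U^s → V`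
is invertible, so all entries of the matrix of a composite `h ∘ g : V^t → U^s → V^t` lie in the
Jacobson radical of `End_A V`; hence `h ∘ g` lies in the radical of `End_A (V^t)` and `1 - h ∘ g`
is invertible.

Let `B ≤ M ⊕ N` with `B ≅ N` and `(M ⊕ N)/B ≅ M`. The splitting hypothesis makes `B` a direct
summand, and pushing the identity of `B ≅ N` through `M ⊕ N = M + N` and back onto `B` shows that
`(N → B) ∘ (B → N) = 1 - (N → M → N)` for the projection `B → N`. So this projection is injective,
hence bijective, i.e. `B` is the graph of a unique map `N → M`; conversely every graph qualifies.
-/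

section Indecomposable

variable {A W : Type*} [Ring A] [AddCommGroup W] [Module A W]

theorem Module.End.isUnit_of_injective [IsArtinian A W] {f : Module.End A W}
    (hf : Function.Injective f) : IsUnit f :=
  (Module.End.isUnit_iff f).mpr (IsArtinian.bijective_of_injective_endomorphism f hf)

variable [IsNoetherian A W] [IsArtinian A W]
  (hind : ∀ N₁ N₂ : Submodule A W, IsCompl N₁ N₂ → N₁ = ⊥ ∨ N₂ = ⊥)
include hind

theorem Module.End.isUnit_or_isNilpotent_of_indecomposable (f : Module.End A W) :
    IsUnit f ∨ IsNilpotent f := by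
  obtain ⟨n, hcompl, hn⟩ :=
    (f.eventually_isCompl_ker_pow_range_pow.and (Filter.eventually_ge_atTop 1)).exists
  rcases hind _ _ hcompl with hker | hrange
  · exact Or.inl <| (isUnit_pow_iff (Nat.one_le_iff_ne_zero.mp hn)).mp <|
      Module.End.isUnit_of_injective (LinearMap.ker_eq_bot.mp hker)
  · exact Or.inr ⟨n, LinearMap.range_eq_bot.mp hrange⟩

theorem Module.End.isLocalRing_of_indecomposable [Nontrivial W] : IsLocalRing (Module.End A W) :=
  .of_isUnit_or_isUnit_one_sub_self fun f ↦
    (f.isUnit_or_isNilpotent_of_indecomposable hind).imp_right fun h ↦ by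
      simpa [sub_eq_add_neg] using h.neg.isUnit_one_add

theorem Module.End.mem_jacobson_bot_of_not_isUnit {f : Module.End A W} (hf : ¬IsUnit f) :
    f ∈ (⊥ : TwoSidedIdeal (Module.End A W)).jacobson := by
  rw [TwoSidedIdeal.mem_jacobson_iff]
  intro g
  -- `f` is not injective, so neither is `g * f`; hence `g * f` is nilpotent.
  have hgf : ¬IsUnit (g * f) := fun h ↦ hf <| Module.End.isUnit_of_injective <|
    Function.Injective.of_comp (f := g) ((Module.End.isUnit_iff _).mp h).injective
  obtain ⟨u, hu⟩ := ((g * f).isUnit_or_isNilpotent_of_indecomposable hind).resolve_left hgf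
    |>.isUnit_one_add
  refine ⟨↑u⁻¹, ?_⟩
  rw [TwoSidedIdeal.mem_bot, mul_assoc, ← mul_add_one, add_comm, ← hu, Units.inv_mul, sub_self]

end Indecomposable

section LocalEnd

variable {A U V : Type*} [Ring A] [AddCommGroup U] [Module A U] [AddCommGroup V] [Module A V]

theorem LinearMap.bijective_of_comp_eq_id_of_isLocalRing [IsLocalRing (Module.End A U)]
    [Nontrivial V] {a : V →ₗ[A] U} {r : U →ₗ[A] V} (h : r ∘ₗ a = LinearMap.id) :
    Function.Bijective a := by
  have ha : Function.Injective a :=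
    Function.LeftInverse.injective (g := r) (LinearMap.congr_fun h)
  have he : IsIdempotentElem (a ∘ₗ r : Module.End A U) := by
    rw [IsIdempotentElem, Module.End.mul_eq_comp, LinearMap.comp_assoc,
      ← LinearMap.comp_assoc r a r, h, LinearMap.id_comp]
  rcases IsLocalRing.isUnit_or_isUnit_of_add_one (add_sub_cancel (a ∘ₗ r : Module.End A U) 1)
    with hu | hu
  · have hsection : a ∘ₗ r = 1 := (IsIdempotentElem.iff_eq_one_of_isUnit hu).mp he
    exact ⟨ha, fun u ↦ ⟨r u, LinearMap.congr_fun hsection u⟩⟩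
  · obtain ⟨v, hv⟩ := exists_ne (0 : V)
    refine absurd (ha (((Module.End.isUnit_iff _).mp hu).injective ?_)) hv
    have hrv : r (a v) = v := LinearMap.congr_fun h v
    simp [hrv]

theorem not_isUnit_comp_of_isEmpty_linearEquiv [IsLocalRing (Module.End A U)] [Nontrivial V]
    (hUV : IsEmpty (U ≃ₗ[A] V)) (a : V →ₗ[A] U) (b : U →ₗ[A] V) :
    ¬IsUnit (b ∘ₗ a : Module.End A V) := by
  rintro ⟨u, hu⟩
  have hleft : (↑u⁻¹ ∘ₗ b) ∘ₗ a = LinearMap.id := by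
    rw [LinearMap.comp_assoc, ← hu]
    exact u.inv_mul
  exact hUV.false
    (LinearEquiv.ofBijective a (LinearMap.bijective_of_comp_eq_id_of_isLocalRing hleft)).symm

theorem not_isUnit_comp_pi {ι : Type*} [Fintype ι] [IsLocalRing (Module.End A V)]
    (hUV : ∀ (a : V →ₗ[A] U) (b : U →ₗ[A] V), ¬IsUnit (b ∘ₗ a : Module.End A V))
    (a : V →ₗ[A] (ι → U)) (b : (ι → U) →ₗ[A] V) : ¬IsUnit (b ∘ₗ a : Module.End A V) := by
  classical
  have hsum :
      b ∘ₗ a = ∑ i, (b ∘ₗ LinearMap.single A (fun _ ↦ U) i) ∘ₗ (LinearMap.proj i ∘ₗ a) := by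
    refine LinearMap.ext fun v ↦ ?_
    simp only [LinearMap.sum_apply, LinearMap.comp_apply, LinearMap.proj_apply, ← map_sum,
      LinearMap.coe_single, Finset.univ_sum_single]
  intro hu
  rw [hsum] at hu
  obtain ⟨i, -, hi⟩ := IsLocalRing.exists_of_isUnit_sum hu
  exact hUV _ _ hi

end LocalEnd

theorem Module.End.isUnit_one_sub_comp_of_forall_not_isUnit {A V P ι : Type*} [Ring A]
    [AddCommGroup V] [Module A V] [IsNoetherian A V] [IsArtinian A V]
    [AddCommGroup P] [Module A P] [Fintype ι] [DecidableEq ι]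
    (hind : ∀ N₁ N₂ : Submodule A V, IsCompl N₁ N₂ → N₁ = ⊥ ∨ N₂ = ⊥)
    (hPV : ∀ (a : V →ₗ[A] P) (b : P →ₗ[A] V), ¬IsUnit (b ∘ₗ a : Module.End A V))
    (g : (ι → V) →ₗ[A] P) (h : P →ₗ[A] (ι → V)) :
    IsUnit (1 - h ∘ₗ g : Module.End A (ι → V)) := by
  set φ := endVecRingEquivMatrixEnd ι A V
  have hmem : φ (h ∘ₗ g) ∈ (⊥ : TwoSidedIdeal (Matrix ι ι (Module.End A V))).jacobson := by
    rw [← TwoSidedIdeal.matrix_jacobson_bot]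
    intro i j
    apply Module.End.mem_jacobson_bot_of_not_isUnit hind
    -- the `(i, j)` entry of `h ∘ g` is the composite `V → P → V` below
    exact hPV (g ∘ₗ LinearMap.single A (fun _ ↦ V) j) (LinearMap.proj i ∘ₗ h)
  obtain ⟨z, hz⟩ := TwoSidedIdeal.mem_jacobson_iff.mp hmem (-1)
  have hleft : φ.symm z * (1 - h ∘ₗ g) = 1 := by
    apply φ.injective
    rw [TwoSidedIdeal.mem_bot] at hz
    rw [map_mul, map_sub, map_one, RingEquiv.apply_symm_apply, ← sub_eq_zero, ← hz]
    noncomm_ring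
  exact Module.End.isUnit_of_injective <|
    Function.LeftInverse.injective (g := φ.symm z) fun x ↦ LinearMap.congr_fun hleft x

theorem bijective_snd_comp_subtype_of_isCompl {R P Q : Type*} [Ring R] [AddCommGroup P]
    [Module R P] [AddCommGroup Q] [Module R Q] [IsArtinian R Q]
    (hPQ : ∀ (g : Q →ₗ[R] P) (h : P →ₗ[R] Q), IsUnit (1 - h ∘ₗ g : Module.End R Q))
    {B C : Submodule R (P × Q)} (hBC : IsCompl B C) (e : B ≃ₗ[R] Q) :
    Function.Bijective (LinearMap.snd R P Q ∘ₗ B.subtype) := by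
  set π := B.projectionOnto C hBC
  set c : Module.End R Q := LinearMap.snd R P Q ∘ₗ B.subtype ∘ₗ e.symm.toLinearMap
  have hc : (e.toLinearMap ∘ₗ π ∘ₗ LinearMap.inr R P Q) ∘ₗ c =
      1 - (e.toLinearMap ∘ₗ π ∘ₗ LinearMap.inl R P Q) ∘ₗ
        (LinearMap.fst R P Q ∘ₗ B.subtype ∘ₗ e.symm.toLinearMap) := by
    refine LinearMap.ext fun y ↦ eq_sub_iff_add_eq.mpr ?_
    have hsplit : ∀ x : P × Q, LinearMap.inr R P Q x.2 + LinearMap.inl R P Q x.1 = x :=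
      fun x ↦ by simp
    simp only [c, LinearMap.comp_apply, LinearEquiv.coe_coe, Module.End.one_apply, ← map_add,
      Submodule.subtype_apply, LinearMap.fst_apply, LinearMap.snd_apply, hsplit]
    rw [Submodule.projectionOnto_apply_left, e.apply_symm_apply]
  have hc_inj : Function.Injective c :=
    Function.Injective.of_comp (f := e.toLinearMap ∘ₗ π ∘ₗ LinearMap.inr R P Q) <|
      ((Module.End.isUnit_iff _).mp (hc ▸ hPQ _ _)).injective
  have hsnd : LinearMap.snd R P Q ∘ₗ B.subtype = c ∘ₗ e.toLinearMap := by
    ext b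
    simp [c]
  rw [hsnd, LinearMap.coe_comp]
  exact (IsArtinian.bijective_of_injective_endomorphism c hc_inj).comp e.bijective

section Graph

variable {R P Q : Type*} [Ring R] [AddCommGroup P] [Module R P] [AddCommGroup Q] [Module R Q]

theorem LinearMap.mem_range_prod_id {φ : Q →ₗ[R] P} {x : P × Q} :
    x ∈ LinearMap.range (φ.prod LinearMap.id) ↔ x.1 = φ x.2 :=
  ⟨by rintro ⟨y, rfl⟩; rfl, fun hx ↦ ⟨x.2, Prod.ext hx.symm rfl⟩⟩

theorem LinearMap.range_prod_id_injective :
    Function.Injective fun φ : Q →ₗ[R] P ↦ LinearMap.range (φ.prod LinearMap.id) := by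
  intro φ ψ (h : LinearMap.range (φ.prod LinearMap.id) = LinearMap.range (ψ.prod LinearMap.id))
  ext y
  have hy : (φ y, y) ∈ LinearMap.range (ψ.prod LinearMap.id) :=
    h ▸ LinearMap.mem_range_self (φ.prod LinearMap.id) y
  exact LinearMap.mem_range_prod_id.mp hy

theorem Submodule.exists_range_prod_id_eq {B : Submodule R (P × Q)}
    (hB : Function.Bijective (LinearMap.snd R P Q ∘ₗ B.subtype)) :
    ∃ φ : Q →ₗ[R] P, LinearMap.range (φ.prod LinearMap.id) = B := by
  set e := LinearEquiv.ofBijective _ hB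
  refine ⟨LinearMap.fst R P Q ∘ₗ B.subtype ∘ₗ e.symm.toLinearMap, ?_⟩
  have hgraph : (LinearMap.fst R P Q ∘ₗ B.subtype ∘ₗ e.symm.toLinearMap).prod LinearMap.id =
      B.subtype ∘ₗ e.symm.toLinearMap := by
    refine LinearMap.ext fun y ↦ Prod.ext rfl ?_
    exact (e.apply_symm_apply y).symm
  rw [hgraph, LinearMap.range_comp_of_range_eq_top _ e.symm.range, Submodule.range_subtype]

noncomputable def LinearMap.quotientRangeProdIdEquiv (φ : Q →ₗ[R] P) :
    ((P × Q) ⧸ LinearMap.range (φ.prod LinearMap.id)) ≃ₗ[R] P :=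
  let π := LinearMap.fst R P Q - φ ∘ₗ LinearMap.snd R P Q
  have hker : LinearMap.ker π = LinearMap.range (φ.prod LinearMap.id) := by
    ext x
    rw [LinearMap.mem_ker, LinearMap.mem_range_prod_id]
    simp [π, sub_eq_zero]
  (Submodule.quotEquivOfEq _ _ hker.symm).trans
    (π.quotKerEquivOfSurjective fun x ↦ ⟨(x, 0), by simp [π]⟩)

theorem natCard_submodules_eq_card_linearMap
    (hsnd : ∀ B : Submodule R (P × Q), Nonempty (B ≃ₗ[R] Q) →
      Nonempty (((P × Q) ⧸ B) ≃ₗ[R] P) → Function.Bijective (LinearMap.snd R P Q ∘ₗ B.subtype)) :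
    Nat.card {B : Submodule R (P × Q) //
      Nonempty (B ≃ₗ[R] Q) ∧ Nonempty (((P × Q) ⧸ B) ≃ₗ[R] P)} = Nat.card (Q →ₗ[R] P) := by
  have hrange : {B : Submodule R (P × Q) |
      Nonempty (B ≃ₗ[R] Q) ∧ Nonempty (((P × Q) ⧸ B) ≃ₗ[R] P)} =
      Set.range fun φ : Q →ₗ[R] P ↦ LinearMap.range (φ.prod LinearMap.id) := by
    ext B
    constructor
    · rintro ⟨⟨e⟩, ⟨f⟩⟩
      exact Submodule.exists_range_prod_id_eq (hsnd B ⟨e⟩ ⟨f⟩)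
    · rintro ⟨φ, rfl⟩
      exact ⟨⟨(LinearEquiv.ofInjective _ fun _ _ h ↦ congrArg Prod.snd h).symm⟩,
        ⟨φ.quotientRangeProdIdEquiv⟩⟩
  exact (congrArg (Nat.card ∘ Set.Elem) hrange).trans
    (Nat.card_range_of_injective LinearMap.range_prod_id_injective)

end Graph

theorem Nat.card_linearMap_pi {A U V ι κ : Type*} [Ring A] [AddCommGroup U] [Module A U]
    [AddCommGroup V] [Module A V] [Fintype ι] [Fintype κ] [DecidableEq ι] :
    Nat.card ((ι → V) →ₗ[A] (κ → U)) =
      Nat.card (V →ₗ[A] U) ^ (Fintype.card κ * Fintype.card ι) := by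
  rw [Nat.card_congr ((LinearEquiv.linearMapPi ℕ).symm.toEquiv.trans
      (Equiv.piCongrRight fun _ ↦ (LinearMap.lsum A (fun _ : ι ↦ V) ℕ).symm.toEquiv)),
    Nat.card_fun, Nat.card_fun, ← pow_mul, Nat.card_eq_fintype_card (α := ι),
    Nat.card_eq_fintype_card (α := κ), mul_comm]

theorem stmt7_general (k : Type) [Field k] [Fintype k] (q : ℕ) (hq : Fintype.card k = q)
    (A : Type) [Ring A] [Algebra k A]
    (U V : Type)
    [AddCommGroup U] [Module k U] [Module A U] [IsScalarTower k A U] [SMulCommClass k A U]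
    [FiniteDimensional k U]
    [AddCommGroup V] [Module k V] [Module A V] [IsScalarTower k A V] [SMulCommClass k A V]
    [FiniteDimensional k V]
    (hU : Nontrivial U) (hV : Nontrivial V)
    (hindU : ∀ N₁ N₂ : Submodule A U, IsCompl N₁ N₂ → N₁ = ⊥ ∨ N₂ = ⊥)
    (hindV : ∀ N₁ N₂ : Submodule A V, IsCompl N₁ N₂ → N₁ = ⊥ ∨ N₂ = ⊥)
    (hnoniso : IsEmpty (U ≃ₗ[A] V))
    (s t : ℕ)
    (hsplit : ∀ (E : Type) [AddCommGroup E] [Module k E] [Module A E]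
      [IsScalarTower k A E] [FiniteDimensional k E] (f : (Fin t → V) →ₗ[A] E),
      Function.Injective f →
        Nonempty ((E ⧸ LinearMap.range f) ≃ₗ[A] (Fin s → U)) →
          ∃ C : Submodule A E, IsCompl (LinearMap.range f) C) :
    Nat.card {B : Submodule A ((Fin s → U) × (Fin t → V)) //
        Nonempty (B ≃ₗ[A] (Fin t → V)) ∧
          Nonempty ((((Fin s → U) × (Fin t → V)) ⧸ B) ≃ₗ[A] (Fin s → U))} =
      Nat.card ((Fin t → V) →ₗ[A] (Fin s → U)) ∧
    Nat.card ((Fin t → V) →ₗ[A] (Fin s → U)) =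
      q ^ (s * t * Module.finrank k (V →ₗ[A] U)) := by
  have : IsNoetherian A U := isNoetherian_of_tower k inferInstance
  have : IsArtinian A U := isArtinian_of_tower k inferInstance
  have : IsNoetherian A V := isNoetherian_of_tower k inferInstance
  have : IsArtinian A V := isArtinian_of_tower k inferInstance
  have := Module.End.isLocalRing_of_indecomposable hindU
  have := Module.End.isLocalRing_of_indecomposable hindV
  have hVU : ∀ (a : V →ₗ[A] (Fin s → U)) (b : (Fin s → U) →ₗ[A] V),
      ¬IsUnit (b ∘ₗ a : Module.End A V) :=
    not_isUnit_comp_pi (not_isUnit_comp_of_isEmpty_linearEquiv hnoniso)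
  refine ⟨natCard_submodules_eq_card_linearMap fun B ⟨e⟩ ⟨f⟩ ↦ ?_, ?_⟩
  · have hrange : LinearMap.range (B.subtype ∘ₗ e.symm.toLinearMap) = B := by
      rw [LinearMap.range_comp_of_range_eq_top _ e.symm.range, Submodule.range_subtype]
    obtain ⟨C, hC⟩ := hsplit _ (B.subtype ∘ₗ e.symm.toLinearMap)
      (B.injective_subtype.comp e.symm.injective) ⟨(Submodule.quotEquivOfEq _ _ hrange).trans f⟩
    rw [hrange] at hC
    exact bijective_snd_comp_subtype_of_isCompl
      (Module.End.isUnit_one_sub_comp_of_forall_not_isUnit hindV hVU) hC e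
  · rw [Nat.card_linearMap_pi, Module.natCard_eq_pow_finrank (K := k), Nat.card_eq_fintype_card,
      hq, Fintype.card_fin, Fintype.card_fin, ← pow_mul, mul_comm]

/-- Let `k` be a finite field with `q` elements, `A` a finite-dimensional
`k`-algebra and `U, V` non-isomorphic indecomposable finite-dimensional `A`-modules. Let
`s, t > 0`, `M = U^{⊕s}`, `N = V^{⊕t}`, and assume every short exact sequence
`0 → N → E → M → 0` splits. Then the number of `A`-submodules `B` of `M ⊕ N` with `B ≅ N`
and `(M ⊕ N)/B ≅ M` equals `|Hom_A(N, M)| = q^(s·t·dim_k Hom_A(V, U))`. -/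
theorem stmt7 (k : Type) [Field k] [Fintype k] (q : ℕ) (hq : Fintype.card k = q)
    (A : Type) [Ring A] [Algebra k A] [FiniteDimensional k A]
    (U V : Type)
    [AddCommGroup U] [Module k U] [Module A U] [IsScalarTower k A U] [SMulCommClass k A U]
    [FiniteDimensional k U]
    [AddCommGroup V] [Module k V] [Module A V] [IsScalarTower k A V] [SMulCommClass k A V]
    [FiniteDimensional k V]
    (hU : Nontrivial U) (hV : Nontrivial V)
    (hindU : ∀ N₁ N₂ : Submodule A U, IsCompl N₁ N₂ → N₁ = ⊥ ∨ N₂ = ⊥)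
    (hindV : ∀ N₁ N₂ : Submodule A V, IsCompl N₁ N₂ → N₁ = ⊥ ∨ N₂ = ⊥)
    (hnoniso : IsEmpty (U ≃ₗ[A] V))
    (s t : ℕ) (hs : 0 < s) (ht : 0 < t)
    (hsplit : ∀ (E : Type) [AddCommGroup E] [Module k E] [Module A E]
      [IsScalarTower k A E] [FiniteDimensional k E] (f : (Fin t → V) →ₗ[A] E),
      Function.Injective f →
        Nonempty ((E ⧸ LinearMap.range f) ≃ₗ[A] (Fin s → U)) →
          ∃ C : Submodule A E, IsCompl (LinearMap.range f) C) :
    Nat.card {B : Submodule A ((Fin s → U) × (Fin t → V)) //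
        Nonempty (B ≃ₗ[A] (Fin t → V)) ∧
          Nonempty ((((Fin s → U) × (Fin t → V)) ⧸ B) ≃ₗ[A] (Fin s → U))} =
      Nat.card ((Fin t → V) →ₗ[A] (Fin s → U)) ∧
    Nat.card ((Fin t → V) →ₗ[A] (Fin s → U)) =
      q ^ (s * t * Module.finrank k (V →ₗ[A] U)) :=
  stmt7_general k q hq A U V hU hV hindU hindV hnoniso s t hsplit
end

section
/- Let k be a finite field with q elements, A a finite-dimensional k-algebra, and M₁, ..., M_r pairwise non-isomorphic finite-dimensional A-modules such that for each i the endomorphism ring End_A(M_i) is a field with q^{ε_i} elements. Let s₁, ..., s_r be positive integers and M = M₁^{⊕s₁} ⊕ ··· ⊕ M_r^{⊕s_r}. Then |End_A(M)| · ∏_{i=1}^{r} ∏_{t=0}^{s_i - 1} (q^{(s_i - t)ε_i} - 1) = |Aut_A(M)| · ∏_{i=1}^{r} ∏_{t=0}^{s_i - 1} q^{(s_i - t)ε_i}; equivalently, |End_A(M)| / |Aut_A(M)| = ∏_{i=1}^{r} ∏_{t=0}^{s_i - 1} (1 - q^{-(s_i - t)ε_i})^{-1}. -/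
/-!
An endomorphism of `Mᵢ` factoring through `Mⱼ` (`i ≠ j`) vanishes: if it were nonzero it would
be invertible in the field `End_A(Mᵢ)`, making `Mᵢ` a summand of `Mⱼ`, and the splitting idempotent
would be `1` in the field `End_A(Mⱼ)`, so `Mᵢ ≅ Mⱼ`. Hence taking the diagonal blocks is a
surjective ring homomorphism `End_A(M) → ∏ᵢ End_A(Mᵢ^{sᵢ}) ≅ ∏ᵢ Mat_{sᵢ}(𝔽_{q^{εᵢ}})`, and it
reflects units: for `x` in its kernel, `1 + x` is invertible by eliminating one block at a time.
Both `End_A(M)` and `Aut_A(M)` are therefore the kernel times the corresponding product of matrix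
rings, resp. of general linear groups, and the identity reduces to
`|GL_n(𝔽_Q)| = ∏_{t<n} (Qⁿ - Qᵗ)`.
-/

open Finset

section Idempotents

variable {E : Type*} [Ring E]

theorem isUnit_one_add_of_isUnit_one_add_corner {p q x : E} (hpq : p * q = 0) (hqp : q * p = 0)
    (hpqp : ∀ f g, p * f * q * g * p = 0) (hx : (p + q) * x * (p + q) = x)
    (hpxp : p * x * p = 0) (hcorner : IsUnit (1 + q * x * q)) : IsUnit (1 + x) := by
  set a := q * x * q
  set b := q * x * p
  set c := p * x * q
  have hx_eq : x = a + b + c := by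
    calc x = (p + q) * x * (p + q) := hx.symm
      _ = p * x * p + a + b + c := by simp only [a, b, c]; noncomm_ring
      _ = a + b + c := by rw [hpxp, zero_add]
  obtain ⟨u, hu⟩ := hcorner
  have hpw : p * ↑u⁻¹ = p := by
    refine u.mul_inv_eq_iff_eq_mul.mpr (Eq.symm ?_)
    rw [hu, mul_add, mul_one, ← mul_assoc, ← mul_assoc, hpq, zero_mul, zero_mul, add_zero]
  set b' := ↑u⁻¹ * b
  have hb' : (1 + a) * b' = b := by rw [← hu, Units.mul_inv_cancel_left]
  have hac : a * c = 0 := by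
    calc a * c = q * x * (q * p) * x * q := by simp only [a, c, mul_assoc]
      _ = 0 := by rw [hqp]; simp
  have hcc : c * c = 0 := by
    calc c * c = p * x * (q * p) * x * q := by simp only [c, mul_assoc]
      _ = 0 := by rw [hqp]; simp
  have hb'b' : b' * b' = 0 := by
    calc b' * b' = ↑u⁻¹ * q * x * (p * ↑u⁻¹ * q) * x * p := by simp only [b', b, mul_assoc]
      _ = 0 := by rw [hpw, hpq]; simp
  have hcb' : c * b' = 0 := by
    calc c * b' = p * x * q * (↑u⁻¹ * q * x) * p := by simp only [b', b, c, mul_assoc]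
      _ = 0 := hpqp _ _
  have hfactor : 1 + x = (1 + a) * ((1 + c) * (1 + b')) := by
    calc 1 + x = 1 + a + (c + a * c) + (1 + a) * b' := by rw [hac, hb', hx_eq]; abel
      _ = (1 + a) * (1 + (c + b')) := by noncomm_ring
      _ = (1 + a) * ((1 + c) * (1 + b')) := by
        rw [show (1 + c) * (1 + b') = 1 + (c + b') + c * b' by noncomm_ring, hcb', add_zero]
  have hsq : ∀ y : E, y * y = 0 → IsUnit (1 + y) := fun y hy =>
    IsNilpotent.isUnit_one_add ⟨2, by rw [pow_two, hy]⟩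
  rw [hfactor]
  exact (hu ▸ u.isUnit).mul ((hsq c hcc).mul (hsq b' hb'b'))

theorem OrthogonalIdempotents.isUnit_one_add {ι : Type*} {e : ι → E}
    (he : OrthogonalIdempotents e)
    (hcycle : Pairwise fun i j => ∀ f g : E, e i * f * e j * g * e i = 0)
    (S : Finset ι) {x : E} (hx : (∑ i ∈ S, e i) * x * ∑ i ∈ S, e i = x)
    (hdiag : ∀ i ∈ S, e i * x * e i = 0) : IsUnit (1 + x) := by
  classical
  induction S using Finset.induction_on generalizing x with
  | empty => rw [← hx]; simp
  | insert t S ht ih =>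
    rw [sum_insert ht] at hx
    have hqi : ∀ i ∈ S, (∑ j ∈ S, e j) * e i = e i := fun i hi => by
      rw [sum_mul, sum_eq_single_of_mem i hi fun j _ hji => he.ortho hji, (he.idem i).eq]
    refine isUnit_one_add_of_isUnit_one_add_corner (he.mul_sum_of_notMem ht)
      (sum_mul S e (e t) ▸ sum_eq_zero fun j hj => he.ortho (ne_of_mem_of_not_mem hj ht))
      (fun f g => ?_) hx (hdiag t (mem_insert_self t S)) (ih ?_ fun i hi => ?_)
    · simp only [mul_sum, sum_mul]
      exact sum_eq_zero fun j hj => hcycle (ne_of_mem_of_not_mem hj ht).symm f g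
    · simp only [← mul_assoc, he.isIdempotentElem_sum.eq]
      simp only [mul_assoc, he.isIdempotentElem_sum.eq]
    · calc e i * ((∑ j ∈ S, e j) * x * ∑ j ∈ S, e j) * e i
          = (e i * ∑ j ∈ S, e j) * x * ((∑ j ∈ S, e j) * e i) := by simp only [mul_assoc]
        _ = 0 := by rw [he.mul_sum_of_mem hi, hqi i hi, hdiag i (mem_insert_of_mem hi)]

end Idempotents

section Counting

variable {R S : Type*} [Ring R] [Ring S] {π : R →+* S}

noncomputable def RingHom.equivKerProdOfSurjective (hπ : Function.Surjective π) :
    R ≃ RingHom.ker π × S where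
  toFun r := (⟨r - Function.surjInv hπ (π r), by simp [Function.surjInv_eq hπ]⟩, π r)
  invFun p := p.1 + Function.surjInv hπ p.2
  left_inv r := by simp
  right_inv p := by
    have hp : π p.1 = 0 := p.1.2
    ext <;> simp [Function.surjInv_eq hπ, hp]

noncomputable def RingHom.unitsEquivKerProdOfSurjective [IsLocalHom π]
    (hπ : Function.Surjective π) : Rˣ ≃ RingHom.ker π × Sˣ where
  toFun u := ((RingHom.equivKerProdOfSurjective hπ u).1, Units.map π u)
  invFun p := (IsUnit.of_map π (p.1 + Function.surjInv hπ p.2) <| by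
    have hp : π p.1 = 0 := p.1.2
    simp [Function.surjInv_eq hπ, hp]).unit
  left_inv u := by ext; simp [RingHom.equivKerProdOfSurjective]
  right_inv p := by
    have hp : π p.1 = 0 := p.1.2
    ext <;> simp [RingHom.equivKerProdOfSurjective, Function.surjInv_eq hπ, hp]

theorem RingHom.card_eq_card_ker_mul_of_surjective (hπ : Function.Surjective π) :
    Nat.card R = Nat.card (RingHom.ker π) * Nat.card S := by
  rw [Nat.card_congr (RingHom.equivKerProdOfSurjective hπ), Nat.card_prod]

theorem RingHom.card_units_eq_card_ker_mul_of_surjective [IsLocalHom π]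
    (hπ : Function.Surjective π) : Nat.card Rˣ = Nat.card (RingHom.ker π) * Nat.card Sˣ := by
  rw [Nat.card_congr (RingHom.unitsEquivKerProdOfSurjective hπ), Nat.card_prod]

end Counting

section Schur

variable {A X Y : Type*} [Ring A] [AddCommGroup X] [Module A X] [AddCommGroup Y] [Module A Y]

theorem LinearMap.comp_eq_zero_of_isField_end (hX : IsField (Module.End A X))
    (hY : IsField (Module.End A Y)) (hXY : IsEmpty (X ≃ₗ[A] Y)) (f : X →ₗ[A] Y)
    (g : Y →ₗ[A] X) : g ∘ₗ f = 0 := by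
  by_contra hgf
  obtain ⟨ψ, hψ⟩ := hX.mul_inv_cancel hgf
  have hleft : (ψ ∘ₗ g) ∘ₗ f = LinearMap.id := by rw [hX.mul_comm] at hψ; exact hψ
  set ε : Module.End A Y := f ∘ₗ ψ ∘ₗ g
  have hε : ε * ε = ε := by
    change f ∘ₗ ((ψ ∘ₗ g) ∘ₗ f) ∘ₗ ψ ∘ₗ g = ε
    rw [hleft]; rfl
  have hε0 : ε ≠ 0 := fun h0 => hgf <| by
    have : g ∘ₗ (ε ∘ₗ f) = g ∘ₗ f := by
      change g ∘ₗ f ∘ₗ ((ψ ∘ₗ g) ∘ₗ f) = g ∘ₗ f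
      rw [hleft]; rfl
    rw [← this, h0, LinearMap.zero_comp, LinearMap.comp_zero]
  obtain ⟨η, hη⟩ := hY.mul_inv_cancel hε0
  have hright : f ∘ₗ ψ ∘ₗ g = LinearMap.id := by
    calc ε = ε * (ε * η) := by rw [hη, mul_one]
      _ = 1 := by rw [← mul_assoc, hε, hη]
  exact hXY.false (LinearEquiv.ofLinearMap f (ψ ∘ₗ g) hright hleft)

theorem LinearMap.comp_eq_zero_pi {κ μ : Type*} [Fintype κ] [Fintype μ] [DecidableEq κ]
    [DecidableEq μ] (h : ∀ (f : X →ₗ[A] Y) (g : Y →ₗ[A] X), g ∘ₗ f = 0)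
    (f : (κ → X) →ₗ[A] μ → Y) (g : (μ → Y) →ₗ[A] κ → X) : g ∘ₗ f = 0 := by
  have h' : ∀ (f : X →ₗ[A] μ → Y) (g : (μ → Y) →ₗ[A] X), g ∘ₗ f = 0 := fun f g => by
    ext x
    rw [LinearMap.comp_apply, ← Finset.univ_sum_single (f x), map_sum]
    exact Finset.sum_eq_zero fun c _ =>
      congr($(h (LinearMap.proj c ∘ₗ f) (g ∘ₗ LinearMap.single A (fun _ : μ => Y) c)) x)
  ext b x a
  exact congr($(h' (f ∘ₗ LinearMap.single A (fun _ : κ => X) b) (LinearMap.proj a ∘ₗ g)) x)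

end Schur

section PiEnd

variable {A ι : Type*} [Ring A] [Fintype ι] [DecidableEq ι] {N : ι → Type*}
  [∀ i, AddCommGroup (N i)] [∀ i, Module A (N i)]

theorem LinearMap.completeOrthogonalIdempotents_single_comp_proj :
    CompleteOrthogonalIdempotents fun i => (LinearMap.single A N i ∘ₗ LinearMap.proj i :
      Module.End A (∀ i, N i)) where
  idem i := by ext; simp
  ortho i j hij := LinearMap.ext fun x => by
    change Pi.single i (Pi.single j (x j) i) = 0
    rw [Pi.single_eq_of_ne hij, Pi.single_zero]
  complete := by ext x j; simp

def Module.End.diagBlocks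
    (hN : Pairwise fun i j => ∀ (f : N i →ₗ[A] N j) (g : N j →ₗ[A] N i), g ∘ₗ f = 0) :
    Module.End A (∀ i, N i) →+* ∀ i, Module.End A (N i) where
  toFun f i := LinearMap.proj i ∘ₗ f ∘ₗ LinearMap.single A N i
  map_one' := funext fun i => LinearMap.proj_comp_single_same A N i
  map_mul' f g := funext fun i => by
    ext x
    change f (g (Pi.single i x)) i = f (Pi.single i (g (Pi.single i x) i)) i
    conv_lhs => rw [← Finset.univ_sum_single (g (Pi.single i x)), map_sum, Finset.sum_apply]
    exact Finset.sum_eq_single i (fun j _ hji => congr($(hN hji.symm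
      (LinearMap.proj j ∘ₗ g ∘ₗ LinearMap.single A N i)
      (LinearMap.proj i ∘ₗ f ∘ₗ LinearMap.single A N j)) x)) (by simp)
  map_zero' := rfl
  map_add' _ _ := rfl

variable (hN : Pairwise fun i j => ∀ (f : N i →ₗ[A] N j) (g : N j →ₗ[A] N i), g ∘ₗ f = 0)

theorem Module.End.diagBlocks_piMap (g : ∀ i, Module.End A (N i)) :
    Module.End.diagBlocks hN (LinearMap.piMap g) = g := by
  ext i x
  change g i (Pi.single i x i) = g i x
  rw [Pi.single_eq_same]

theorem Module.End.diagBlocks_surjective : Function.Surjective (Module.End.diagBlocks hN) :=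
  fun g => ⟨_, Module.End.diagBlocks_piMap hN g⟩

theorem Module.End.isUnit_of_diagBlocks_eq_one {f : Module.End A (∀ i, N i)}
    (hf : Module.End.diagBlocks hN f = 1) : IsUnit f := by
  have he := LinearMap.completeOrthogonalIdempotents_single_comp_proj (A := A) (N := N)
  have hx : Module.End.diagBlocks hN (f - 1) = 0 := by rw [map_sub, hf, map_one, sub_self]
  simpa using he.isUnit_one_add (fun i j hij g h => LinearMap.ext fun x => by
      change Pi.single i (g (Pi.single j (h (Pi.single i (x i)) j)) i) = 0
      rw [show g (Pi.single j (h (Pi.single i (x i)) j)) i = 0 from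
        congr($(hN hij (LinearMap.proj j ∘ₗ h ∘ₗ LinearMap.single A N i)
          (LinearMap.proj i ∘ₗ g ∘ₗ LinearMap.single A N j)) (x i)), Pi.single_zero])
    Finset.univ (x := f - 1) (by rw [he.complete, one_mul, mul_one]) fun i _ =>
      LinearMap.ext fun x => by
        change Pi.single i ((f - 1) (Pi.single i (x i)) i) = 0
        rw [show (f - 1) (Pi.single i (x i)) i = 0 from congr($(congr_fun hx i) (x i)),
          Pi.single_zero]

instance Module.End.isLocalHom_diagBlocks : IsLocalHom (Module.End.diagBlocks hN) where
  map_nonunit f hf := by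
    set g := LinearMap.piMap (hf.unit⁻¹ : (∀ i, Module.End A (N i))ˣ).val
    have hfg : IsUnit (f * g) := Module.End.isUnit_of_diagBlocks_eq_one hN <| by
      rw [map_mul, Module.End.diagBlocks_piMap, IsUnit.mul_val_inv]
    have hgf : IsUnit (g * f) := Module.End.isUnit_of_diagBlocks_eq_one hN <| by
      rw [map_mul, Module.End.diagBlocks_piMap, IsUnit.val_inv_mul]
    obtain ⟨u, hu⟩ := hfg
    obtain ⟨v, hv⟩ := hgf
    exact isUnit_iff_exists_and_exists.mpr
      ⟨⟨g * ↑u⁻¹, by rw [← mul_assoc, ← hu, u.mul_inv]⟩,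
       ⟨↑v⁻¹ * g, by rw [mul_assoc, ← hv, v.inv_mul]⟩⟩

end PiEnd

section MatrixCount

variable {A X : Type*} [Ring A] [AddCommGroup X] [Module A X]

theorem Module.End.card_pi_fin (n : ℕ) :
    Nat.card (Module.End A (Fin n → X)) = Nat.card (Module.End A X) ^ (n * n) := by
  rw [Nat.card_congr (endVecRingEquivMatrixEnd (Fin n) A X).toEquiv]
  change Nat.card (Fin n → Fin n → _) = _
  rw [Nat.card_fun, Nat.card_fun, Nat.card_fin, ← pow_mul]

theorem Module.End.card_units_pi_fin (hX : IsField (Module.End A X)) [Finite (Module.End A X)]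
    (n : ℕ) : Nat.card (Module.End A (Fin n → X))ˣ =
      ∏ t ∈ range n, (Nat.card (Module.End A X) ^ n - Nat.card (Module.End A X) ^ t) := by
  let := hX.toField
  let := Fintype.ofFinite (Module.End A X)
  rw [Nat.card_congr (Units.mapEquiv (endVecRingEquivMatrixEnd (Fin n) A X).toMulEquiv).toEquiv,
    Nat.card_eq_fintype_card (α := Module.End A X), ← Fin.prod_univ_eq_prod_range]
  exact Matrix.card_GL_field n

end MatrixCount

theorem pow_mul_self_mul_prod_pow_sub_one (Q n : ℕ) :
    Q ^ (n * n) * ∏ t ∈ range n, (Q ^ (n - t) - 1) =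
      (∏ t ∈ range n, (Q ^ n - Q ^ t)) * ∏ t ∈ range n, Q ^ (n - t) := by
  have hfactor : ∀ t ∈ range n, (Q ^ n - Q ^ t) * Q ^ (n - t) = Q ^ n * (Q ^ (n - t) - 1) :=
    fun t ht => by
      rw [Nat.sub_mul, Nat.mul_sub, mul_one, ← pow_add, ← pow_add,
        Nat.add_sub_cancel' (mem_range.mp ht).le]
  rw [← prod_mul_distrib, prod_congr rfl hfactor, prod_mul_distrib, prod_const, card_range,
    ← pow_mul]

theorem stmt8_general (k : Type) [Field k] [Fintype k] (q : ℕ) (hq : Fintype.card k = q)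
    (A : Type) [Ring A]
    (r : ℕ) (M : Fin r → Type)
    [∀ i, AddCommGroup (M i)] [∀ i, Module A (M i)]
    (hnoniso : ∀ i j, i ≠ j → IsEmpty (M i ≃ₗ[A] M j))
    (ε : Fin r → ℕ)
    (hfield : ∀ i, IsField (Module.End A (M i)))
    (hcard : ∀ i, Nat.card (Module.End A (M i)) = q ^ ε i)
    (s : Fin r → ℕ) :
    Nat.card (Module.End A (∀ i, Fin (s i) → M i)) *
        ∏ i, ∏ t ∈ Finset.range (s i), (q ^ ((s i - t) * ε i) - 1) =
      Nat.card ((∀ i, Fin (s i) → M i) ≃ₗ[A] (∀ i, Fin (s i) → M i)) *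
        ∏ i, ∏ t ∈ Finset.range (s i), q ^ ((s i - t) * ε i) := by
  have hN : Pairwise fun i j => ∀ (f : (Fin (s i) → M i) →ₗ[A] Fin (s j) → M j)
      (g : (Fin (s j) → M j) →ₗ[A] Fin (s i) → M i), g ∘ₗ f = 0 := fun i j hij =>
    LinearMap.comp_eq_zero_pi <|
      LinearMap.comp_eq_zero_of_isField_end (hfield i) (hfield j) (hnoniso i j hij)
  have hfinite : ∀ i, Finite (Module.End A (M i)) := fun i => Nat.finite_of_card_ne_zero <| by
    rw [hcard i]; exact pow_ne_zero _ (hq ▸ Fintype.card_ne_zero)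
  have hsurj := Module.End.diagBlocks_surjective hN
  rw [Nat.card_congr (LinearMap.GeneralLinearGroup.generalLinearEquiv A _).toEquiv.symm,
    RingHom.card_eq_card_ker_mul_of_surjective hsurj,
    RingHom.card_units_eq_card_ker_mul_of_surjective hsurj,
    Nat.card_congr MulEquiv.piUnits.toEquiv, Nat.card_pi, Nat.card_pi, mul_assoc, mul_assoc,
    ← prod_mul_distrib, ← prod_mul_distrib]
  congr 1
  refine prod_congr rfl fun i _ => ?_
  simp only [pow_mul', ← hcard i]
  rw [Module.End.card_pi_fin, Module.End.card_units_pi_fin (hfield i)]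
  exact pow_mul_self_mul_prod_pow_sub_one _ _

/-- Let `k` be a finite field with `q` elements, `A` a finite-dimensional
`k`-algebra, and `M₁, ..., M_r` pairwise non-isomorphic finite-dimensional `A`-modules such
that each `End_A(Mᵢ)` is a field with `q^{εᵢ}` elements, where `εᵢ = dim_k End_A(Mᵢ)`.
Let `s₁, ..., s_r` be positive integers and `M = ⊕ᵢ Mᵢ^{⊕sᵢ}`. Then
`|End_A(M)| * ∏ᵢ ∏_{t=0}^{sᵢ-1} (q^{(sᵢ-t)εᵢ} - 1) = |Aut_A(M)| * ∏ᵢ ∏_{t=0}^{sᵢ-1} q^{(sᵢ-t)εᵢ}`,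
i.e. `|End_A(M)| / |Aut_A(M)| = ∏ᵢ ∏_{t=0}^{sᵢ-1} (1 - q^{-(sᵢ-t)εᵢ})⁻¹`. -/
theorem stmt8 (k : Type) [Field k] [Fintype k] (q : ℕ) (hq : Fintype.card k = q)
    (A : Type) [Ring A] [Algebra k A] [FiniteDimensional k A]
    (r : ℕ) (M : Fin r → Type)
    [∀ i, AddCommGroup (M i)] [∀ i, Module k (M i)] [∀ i, Module A (M i)]
    [∀ i, IsScalarTower k A (M i)] [∀ i, SMulCommClass k A (M i)]
    [∀ i, FiniteDimensional k (M i)]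
    (hnoniso : ∀ i j, i ≠ j → IsEmpty (M i ≃ₗ[A] M j))
    (ε : Fin r → ℕ) (hε : ∀ i, ε i = Module.finrank k (Module.End A (M i)))
    (hfield : ∀ i, IsField (Module.End A (M i)))
    (hcard : ∀ i, Nat.card (Module.End A (M i)) = q ^ ε i)
    (s : Fin r → ℕ) (hs : ∀ i, 0 < s i) :
    Nat.card (Module.End A (∀ i, Fin (s i) → M i)) *
        ∏ i, ∏ t ∈ Finset.range (s i), (q ^ ((s i - t) * ε i) - 1) =
      Nat.card ((∀ i, Fin (s i) → M i) ≃ₗ[A] (∀ i, Fin (s i) → M i)) *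
        ∏ i, ∏ t ∈ Finset.range (s i), q ^ ((s i - t) * ε i) :=
  stmt8_general k q hq A r M hnoniso ε hfield hcard s
end
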